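/- arXiv:1608.01189 — 2 statements merged into one kernel-verified Lean document; each statement's English description precedes it below -/
import Mathlib

section
/- Let G be a connected finite simple graph on n vertices that has a leaf (a vertex of degree 1) and is not isomorphic to P_4. Then ppt(G) + ppt(Ḡ) ≤ n − 1, where Ḡ is the complement of G. Moreover, for G = P_4 one has ppt(P_4) + ppt(complement of P_4) = 4. -/
namespace PowerProp

open SimpleGraph

variable {V : Type*} {α β : Type*}

/-- The closed neighborhood `N[S]` of a set of vertices. -/
def closedNbhd (G : SimpleGraph V) (S : Set V) : Set V :=
  S ∪ ⋃ v ∈ S, G.neighborSet v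

/-- One propagation step of the `k`-power domination process. -/
def propStep (k : ℕ) (G : SimpleGraph V) (S : Set V) : Set V :=
  S ∪ {w | ∃ v ∈ S, w ∈ G.neighborSet v \ S ∧ (G.neighborSet v \ S).ncard ≤ k}

/-- `S^[t]`: the set observed after `t` steps (step 1 is the domination step). -/
def powerIter (k : ℕ) (G : SimpleGraph V) (S : Set V) : ℕ → Set V
  | 0 => S
  | 1 => closedNbhd G S
  | (t + 2) => propStep k G (powerIter k G S (t + 1))

/-- `S` is a `k`-power dominating set of `G`. -/
def IsPDS (k : ℕ) (G : SimpleGraph V) (S : Set V) : Prop :=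
  ∃ l, powerIter k G S l = Set.univ

/-- The `k`-power domination number `γ_{P,k}(G)`. -/
noncomputable def pdNum (k : ℕ) (G : SimpleGraph V) : ℕ :=
  sInf {n | ∃ S : Set V, S.ncard = n ∧ IsPDS k G S}

/-- `S` is a minimum `k`-power dominating set of `G`. -/
def IsMinPDS (k : ℕ) (G : SimpleGraph V) (S : Set V) : Prop :=
  IsPDS k G S ∧ S.ncard = pdNum k G

/-- `ppt_k(G,S)`, the `k`-power propagation time of `G` with `S`. -/
noncomputable def pptOf (k : ℕ) (G : SimpleGraph V) (S : Set V) : ℕ :=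
  sInf {l | powerIter k G S l = Set.univ}

/-- `ppt_k(G)`, the (minimum) `k`-power propagation time of `G`. -/
noncomputable def ppt (k : ℕ) (G : SimpleGraph V) : ℕ :=
  sInf {t | ∃ S : Set V, IsMinPDS k G S ∧ pptOf k G S = t}

end PowerProp

namespace PowerProp

open SimpleGraph

/-! ### Basic lemmas -/

variable {k t : ℕ} {G : SimpleGraph V} {S T : Set V}

lemma subset_closedNbhd : S ⊆ closedNbhd G S := Set.subset_union_left

lemma subset_propStep : S ⊆ propStep k G S := Set.subset_union_left

lemma closedNbhd_mono (h : S ⊆ T) : closedNbhd G S ⊆ closedNbhd G T := by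
  apply Set.union_subset_union h
  exact Set.biUnion_subset_biUnion_left h

lemma mem_closedNbhd_of_adj {u v : V} (hu : u ∈ S) (h : G.Adj u v) :
    v ∈ closedNbhd G S := by
  right
  exact Set.mem_biUnion hu h

lemma propStep_mono [Fintype V] (h : S ⊆ T) : propStep k G S ⊆ propStep k G T := by
  rintro w (hw | ⟨v, hv, ⟨hadj, hns⟩, hcard⟩)
  · exact Set.subset_union_left (h hw)
  by_cases hwT : w ∈ T
  · exact Set.subset_union_left hwT
  · refine Set.subset_union_right ⟨v, h hv, ⟨hadj, hwT⟩, ?_⟩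
    exact le_trans (Set.ncard_le_ncard (Set.diff_subset_diff_right h) (Set.toFinite _)) hcard

@[simp] lemma powerIter_zero : powerIter k G S 0 = S := rfl
@[simp] lemma powerIter_one : powerIter k G S 1 = closedNbhd G S := rfl

lemma powerIter_succ_of_pos (ht : 1 ≤ t) :
    powerIter k G S (t + 1) = propStep k G (powerIter k G S t) := by
  match t, ht with
  | (n+1), _ => rfl

lemma powerIter_subset_succ : powerIter k G S t ⊆ powerIter k G S (t + 1) := by
  match t with
  | 0 => exact subset_closedNbhd
  | (n+1) => exact subset_propStep

lemma powerIter_mono_right {t t' : ℕ} (h : t ≤ t') :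
    powerIter k G S t ⊆ powerIter k G S t' := by
  induction t' with
  | zero => simp [Nat.le_zero.mp h]
  | succ n ih =>
    rcases Nat.lt_or_ge t (n+1) with h' | h'
    · exact (ih (Nat.lt_succ_iff.mp h')).trans powerIter_subset_succ
    · have : t = n + 1 := le_antisymm h h'
      simp [this]

lemma powerIter_mono_left [Fintype V] (h : S ⊆ T) (t : ℕ) :
    powerIter k G S t ⊆ powerIter k G T t := by
  induction t with
  | zero => exact h
  | succ n ih =>
    match n, ih with
    | 0, _ => exact closedNbhd_mono h
    | (m+1), ih => exact propStep_mono ih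

lemma powerIter_univ_mono {l l' : ℕ} (h : powerIter k G S l = Set.univ) (hl : l ≤ l') :
    powerIter k G S l' = Set.univ :=
  Set.eq_univ_of_univ_subset (h ▸ powerIter_mono_right hl)

lemma IsPDS.powerIter_pptOf (h : IsPDS k G S) :
    powerIter k G S (pptOf k G S) = Set.univ :=
  Nat.sInf_mem h

lemma pptOf_le {l : ℕ} (h : powerIter k G S l = Set.univ) : pptOf k G S ≤ l :=
  Nat.sInf_le h

lemma IsPDS.powerIter_eq_univ_iff (h : IsPDS k G S) {l : ℕ} :
    powerIter k G S l = Set.univ ↔ pptOf k G S ≤ l :=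
  ⟨pptOf_le, fun hl => powerIter_univ_mono h.powerIter_pptOf hl⟩

lemma powerIter_stuck (ht : 1 ≤ t)
    (h : powerIter k G S (t + 1) = powerIter k G S t) {s : ℕ} (hs : t ≤ s) :
    powerIter k G S s = powerIter k G S t := by
  induction s with
  | zero => omega
  | succ n ih =>
    rcases Nat.lt_or_ge t (n+1) with h' | h'
    · have hn : t ≤ n := Nat.lt_succ_iff.mp h'
      rw [powerIter_succ_of_pos (le_trans ht hn), ih hn,
        ← powerIter_succ_of_pos ht, h]
    · have : t = n + 1 := le_antisymm hs h'
      simp [this]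

lemma powerIter_ssubset (hS : IsPDS k G S) (ht : 1 ≤ t)
    (hne : powerIter k G S t ≠ Set.univ) :
    powerIter k G S t ⊂ powerIter k G S (t + 1) := by
  refine Set.ssubset_iff_of_subset powerIter_subset_succ |>.mpr ?_
  by_contra hcon
  push_neg at hcon
  have heq : powerIter k G S (t + 1) = powerIter k G S t := by
    apply Set.Subset.antisymm _ powerIter_subset_succ
    intro x hx
    by_contra hxn
    exact hxn (hcon x hx) |>.elim
  obtain ⟨l, hl⟩ := hS
  rcases Nat.le_total l t with h' | h'
  · exact hne (powerIter_univ_mono hl h')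
  · exact hne ((powerIter_stuck ht heq h').symm.trans hl)

lemma eq_univ_of_ncard_ge [Fintype V] {T : Set V} (h : Fintype.card V ≤ T.ncard) :
    T = Set.univ := by
  exact Set.eq_of_subset_of_ncard_le (Set.subset_univ T)
    (by rwa [Set.ncard_univ, Nat.card_eq_fintype_card])

lemma pptOf_le_card_bound [Fintype V] (hS : IsPDS k G S) :
    pptOf k G S ≤ 1 + (Fintype.card V - (closedNbhd G S).ncard) := by
  set c := (closedNbhd G S).ncard with hc
  have key : ∀ j : ℕ, powerIter k G S (1 + j) = Set.univ ∨
      c + j ≤ (powerIter k G S (1 + j)).ncard := by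
    intro j
    induction j with
    | zero => right; simp [hc]
    | succ n ih =>
      rcases ih with h | h
      · left; exact powerIter_univ_mono h (by omega)
      · by_cases hu : powerIter k G S (1 + n) = Set.univ
        · left; exact powerIter_univ_mono hu (by omega)
        · right
          have hss := powerIter_ssubset hS (by omega) hu
          have := Set.ncard_lt_ncard hss (Set.toFinite _)
          have h1n : 1 + (n + 1) = (1 + n) + 1 := by omega
          rw [h1n]
          omega
  rcases key (Fintype.card V - c) with h | h
  · exact pptOf_le h |>.trans (by omega)
  · by_cases hle : c ≤ Fintype.card V
    · have : Fintype.card V ≤ (powerIter k G S (1 + (Fintype.card V - c))).ncard := by omega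
      exact pptOf_le (eq_univ_of_ncard_ge this) |>.trans (by omega)
    · push_neg at hle
      have h1 : powerIter k G S 1 = Set.univ := by
        rw [powerIter_one]; exact eq_univ_of_ncard_ge (by omega)
      exact (pptOf_le h1).trans (by omega)

lemma isPDS_univ : IsPDS k G (Set.univ : Set V) := ⟨0, rfl⟩

lemma pdNum_set_nonempty : {n | ∃ S : Set V, S.ncard = n ∧ IsPDS k G S}.Nonempty :=
  ⟨(Set.univ : Set V).ncard, Set.univ, rfl, isPDS_univ⟩

lemma exists_isMinPDS : ∃ S : Set V, IsMinPDS k G S := by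
  obtain ⟨S, hcard, hS⟩ := Nat.sInf_mem (pdNum_set_nonempty (k := k) (G := G))
  exact ⟨S, hS, hcard⟩

lemma pdNum_le (hS : IsPDS k G S) : pdNum k G ≤ S.ncard :=
  Nat.sInf_le ⟨S, rfl, hS⟩

lemma ppt_le_pptOf (h : IsMinPDS k G S) : ppt k G ≤ pptOf k G S :=
  Nat.sInf_le ⟨S, h, rfl⟩

lemma exists_ppt_witness : ∃ S : Set V, IsMinPDS k G S ∧ pptOf k G S = ppt k G := by
  have hne : {t | ∃ S : Set V, IsMinPDS k G S ∧ pptOf k G S = t}.Nonempty := by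
    obtain ⟨S, hS⟩ := exists_isMinPDS (k := k) (G := G)
    exact ⟨pptOf k G S, S, hS, rfl⟩
  exact Nat.sInf_mem hne

/-- The shift lemma. -/
lemma isPDS_shift [Fintype V] (hS : IsPDS k G S) (ht : 1 ≤ t)
    (h : powerIter k G S t ⊆ closedNbhd G T) (htp : t ≤ pptOf k G S) :
    IsPDS k G T ∧ pptOf k G T + t ≤ pptOf k G S + 1 := by
  have key : ∀ s : ℕ, powerIter k G S (t + s) ⊆ powerIter k G T (1 + s) := by
    intro s
    induction s with
    | zero => simpa using h
    | succ n ih =>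
      have h1 : t + (n + 1) = (t + n) + 1 := rfl
      rw [h1, powerIter_succ_of_pos (by omega), show 1 + (n+1) = (1+n)+1 from rfl,
        powerIter_succ_of_pos (by omega)]
      exact propStep_mono ih
  set p := pptOf k G S with hp
  have h1 : powerIter k G S (t + (p - t)) = Set.univ := by
    rw [show t + (p - t) = p by omega]; exact hS.powerIter_pptOf
  have h2 : powerIter k G T (1 + (p - t)) = Set.univ :=
    Set.eq_univ_of_univ_subset (h1 ▸ key (p - t))
  exact ⟨⟨_, h2⟩, by have := pptOf_le h2; omega⟩

/-- Extraction of a forcer, for `k = 1`. -/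
lemma exists_forcer [Fintype V] (ht : 1 ≤ t) {z : V} (hz : z ∈ powerIter 1 G S (t + 1))
    (hzn : z ∉ powerIter 1 G S t) :
    ∃ v, v ∈ powerIter 1 G S t ∧ G.neighborSet v \ powerIter 1 G S t = {z} := by
  rw [powerIter_succ_of_pos ht] at hz
  rcases hz with hz | ⟨v, hv, ⟨hadj, hns⟩, hcard⟩
  · exact (hzn hz).elim
  refine ⟨v, hv, ?_⟩
  have hzmem : z ∈ G.neighborSet v \ powerIter 1 G S t := ⟨hadj, hns⟩
  have := (Set.ncard_le_one_iff_eq (Set.toFinite _)).mp hcard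
  rcases this with h | ⟨a, ha⟩
  · rw [h] at hzmem; exact hzmem.elim
  · rw [ha] at hzmem ⊢
    simp_all

lemma closed_eq_univ (hconn : G.Connected) {D : Set V} (hD : D.Nonempty)
    (h : ∀ x ∈ D, ∀ y, G.Adj x y → y ∈ D) : D = Set.univ := by
  obtain ⟨x0, hx0⟩ := hD
  refine Set.eq_univ_of_forall fun y => ?_
  obtain ⟨w⟩ := hconn.preconnected x0 y
  clear hconn
  induction w with
  | nil => exact hx0
  | cons hadj w ih =>
    rename_i a b c
    exact ih (h _ hx0 _ hadj) 

lemma exists_boundary_edge (hconn : G.Connected) {D : Set V} (hD : D.Nonempty)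
    (hne : D ≠ Set.univ) : ∃ x ∈ D, ∃ y, y ∉ D ∧ G.Adj x y := by
  by_contra hcon
  push_neg at hcon
  exact hne (closed_eq_univ hconn hD (fun x hx y hadj => by
    by_contra hy
    exact (hcon x hx y hy) hadj))

end PowerProp


namespace PowerProp
open SimpleGraph
variable {V : Type*} {k t : ℕ} {G : SimpleGraph V} {S T : Set V}

lemma closedNbhd_singleton {x : V} :
    closedNbhd G {x} = insert x (G.neighborSet x) := by
  ext y; simp [closedNbhd]

lemma closedNbhd_empty : closedNbhd G (∅ : Set V) = ∅ := by
  simp [closedNbhd]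

lemma propStep_empty : propStep k G (∅ : Set V) = ∅ := by
  simp [propStep]

lemma powerIter_empty (t : ℕ) : powerIter k G (∅ : Set V) t = ∅ := by
  induction t with
  | zero => rfl
  | succ n ih =>
    match n, ih with
    | 0, _ => exact closedNbhd_empty
    | (m+1), ih => rw [powerIter_succ_of_pos (by omega), ih, propStep_empty]

/-- generalized shift lemma -/
lemma shift_subset [Fintype V] {a b : ℕ} (ha : 1 ≤ a) (hb : 1 ≤ b)
    (h : powerIter k G S a ⊆ powerIter k G T b) (s : ℕ) :
    powerIter k G S (a + s) ⊆ powerIter k G T (b + s) := by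
  induction s with
  | zero => simpa using h
  | succ n ih =>
    rw [show a + (n+1) = (a+n)+1 from rfl, powerIter_succ_of_pos (by omega),
      show b + (n+1) = (b+n)+1 from rfl, powerIter_succ_of_pos (by omega)]
    exact propStep_mono ih

lemma shift_pds [Fintype V] {a b : ℕ} (hS : IsPDS k G S) (ha : 1 ≤ a) (hb : 1 ≤ b)
    (hap : a ≤ pptOf k G S)
    (h : powerIter k G S a ⊆ powerIter k G T b) :
    IsPDS k G T ∧ pptOf k G T ≤ b + (pptOf k G S - a) := by
  have h1 : powerIter k G S (a + (pptOf k G S - a)) = Set.univ := by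
    rw [show a + (pptOf k G S - a) = pptOf k G S by omega]
    exact hS.powerIter_pptOf
  have h2 : powerIter k G T (b + (pptOf k G S - a)) = Set.univ :=
    Set.eq_univ_of_univ_subset (h1 ▸ shift_subset ha hb h _)
  exact ⟨⟨_, h2⟩, pptOf_le h2⟩

/-- The two-front propagation lemma along an induced-path-like structure. -/
lemma fronts [Fintype V] {m : ℕ} (e : ℕ → V) (k0 : ℕ) (hk : k0 < m)
    (hchain : ∀ i, i + 1 < m → G.Adj (e i) (e (i+1)))
    (hint : ∀ i, 0 < i → i + 1 < m → i ≠ k0 → ∀ y, G.Adj (e i) y →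
      (y = e (i-1) ∨ y = e (i+1))) :
    ∀ s, 1 ≤ s → ∀ i, i < m → i ≤ k0 + s → k0 ≤ i + s →
      e i ∈ powerIter 1 G {e k0} s := by
  intro s
  induction s with
  | zero => omega
  | succ n ih =>
    intro _ i him hi1 hi2
    rcases Nat.eq_or_lt_of_le (Nat.one_le_iff_ne_zero.mpr (Nat.succ_ne_zero n)) with hn1 | hn1
    · -- n = 0 : base case s = 1
      have hn0 : n = 0 := by omega
      subst hn0
      rw [powerIter_one, closedNbhd_singleton]
      rcases Nat.lt_trichotomy i k0 with h | h | h
      · have hik : i = k0 - 1 := by omega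
        have : G.Adj (e i) (e k0) := by
          have := hchain i (by omega)
          rwa [show i + 1 = k0 by omega] at this
        exact Set.mem_insert_iff.mpr (Or.inr this.symm)
      · simp [h]
      · have hik : i = k0 + 1 := by omega
        have : G.Adj (e k0) (e i) := by
          have := hchain k0 (by omega)
          rwa [show k0 + 1 = i by omega] at this
        exact Set.mem_insert_iff.mpr (Or.inr this)
    · -- inductive step, n ≥ 1
      have hn : 1 ≤ n := by omega
      by_cases hin : i ≤ k0 + n ∧ k0 ≤ i + n
      · exact powerIter_subset_succ (ih hn i him hin.1 hin.2)
      · rw [powerIter_succ_of_pos (by omega)]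
        push_neg at hin
        -- either i = k0 + n + 1 or i + n + 1 = k0
        rcases Nat.lt_or_ge (k0 + n) i with hcase | hcase
        · -- right front: i = k0 + n + 1, forcer j = k0 + n = i - 1
          have hieq : i = k0 + n + 1 := by omega
          set j := k0 + n with hj
          have hjm : j < m := by omega
          have hjmem : e j ∈ powerIter 1 G {e k0} n := ih hn j hjm (by omega) (by omega)
          by_cases hzin : e i ∈ powerIter 1 G {e k0} n
          · exact subset_propStep hzin
          · refine Set.subset_union_right ⟨e j, hjmem, ⟨?_, hzin⟩, ?_⟩
            · have := hchain j (by omega)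
              rwa [show j + 1 = i by omega] at this
            · have hsub : G.neighborSet (e j) \ powerIter 1 G {e k0} n ⊆ {e i} := by
                rintro y ⟨hy, hyn⟩
                rcases hint j (by omega) (by omega) (by omega) y hy with h | h
                · exfalso
                  apply hyn
                  rw [h]
                  exact ih hn (j-1) (by omega) (by omega) (by omega)
                · rw [h, show j + 1 = i by omega]; rfl
              calc (G.neighborSet (e j) \ powerIter 1 G {e k0} n).ncard
                  ≤ ({e i} : Set V).ncard := Set.ncard_le_ncard hsub (Set.toFinite _)
                _ = 1 := Set.ncard_singleton _
        · -- left front: i + n + 1 = k0, forcer j = i + 1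
          have hieq : i + n + 1 = k0 := by omega
          set j := i + 1 with hj
          have hjm : j < m := by omega
          have hjmem : e j ∈ powerIter 1 G {e k0} n := ih hn j hjm (by omega) (by omega)
          by_cases hzin : e i ∈ powerIter 1 G {e k0} n
          · exact subset_propStep hzin
          · refine Set.subset_union_right ⟨e j, hjmem, ⟨?_, hzin⟩, ?_⟩
            · have := hchain i (by omega)
              exact this.symm
            · have hsub : G.neighborSet (e j) \ powerIter 1 G {e k0} n ⊆ {e i} := by
                rintro y ⟨hy, hyn⟩
                rcases hint j (by omega) (by omega) (by omega) y hy with h | h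
                · rw [h, show j - 1 = i by omega]; rfl
                · exfalso
                  apply hyn
                  rw [h]
                  exact ih hn (j+1) (by omega) (by omega) (by omega)
              calc (G.neighborSet (e j) \ powerIter 1 G {e k0} n).ncard
                  ≤ ({e i} : Set V).ncard := Set.ncard_le_ncard hsub (Set.toFinite _)
                _ = 1 := Set.ncard_singleton _

end PowerProp


namespace PowerProp
open SimpleGraph
variable {V : Type*} [Fintype V] {G : SimpleGraph V}

/-- Invariant: `e` enumerates `O` as an induced path whose interior vertices have
all their neighbours inside `O`. -/
def PathInv (G : SimpleGraph V) (O : Set V) (m : ℕ) (e : ℕ → V) : Prop :=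
  (∀ i j, i < m → j < m → e i = e j → i = j) ∧
  (∀ x, x ∈ O ↔ ∃ i, i < m ∧ e i = x) ∧
  (∀ i j, i < m → j < m → (G.Adj (e i) (e j) ↔ (j = i + 1 ∨ i = j + 1))) ∧
  (∀ i, 0 < i → i + 1 < m → ∀ y, G.Adj (e i) y → y ∈ O)

lemma PathInv.reverse {O : Set V} {m : ℕ} {e : ℕ → V} (h : PathInv G O m e) :
    PathInv G O m (fun i => e (m - 1 - i)) := by
  obtain ⟨hinj, hcov, hadjE, hsat⟩ := h
  refine ⟨?_, ?_, ?_, ?_⟩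
  · intro i j hi hj hij
    have := hinj _ _ (by omega) (by omega) hij
    omega
  · intro x
    rw [hcov x]
    constructor
    · rintro ⟨i, hi, rfl⟩
      exact ⟨m - 1 - i, by omega, by simp only []; congr 1; omega⟩
    · rintro ⟨i, hi, rfl⟩
      exact ⟨m - 1 - i, by omega, rfl⟩
  · intro i j hi hj
    rw [hadjE _ _ (by omega) (by omega)]
    omega
  · intro i h0 him y hadj
    exact hsat (m - 1 - i) (by omega) (by omega) y hadj

end PowerProp


namespace PowerProp
open SimpleGraph
variable {V : Type*} [Fintype V] {G : SimpleGraph V}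

lemma big_case' {u a b : V} (hconn : G.Connected) (h5 : 5 ≤ Fintype.card V)
    (hNu : G.neighborSet u = {a, b}) (hab : a ≠ b)
    (hu : IsPDS 1 G {u})
    (hsingle : ∀ x : V, IsPDS 1 G {x} → Fintype.card V - 2 ≤ pptOf 1 G {x})
    (hdeg : ∀ x : V, IsPDS 1 G {x} → (closedNbhd G {x}).ncard ≤ 3)
    (hpptu : pptOf 1 G {u} = Fintype.card V - 2) : False := by
  classical
  have hAdj_ua : G.Adj u a := by
    have : a ∈ G.neighborSet u := by rw [hNu]; exact Set.mem_insert _ _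
    exact this
  have hAdj_ub : G.Adj u b := by
    have : b ∈ G.neighborSet u := by rw [hNu]; exact Set.mem_insert_iff.mpr (Or.inr rfl)
    exact this
  have hua : u ≠ a := fun h => G.irrefl (h ▸ hAdj_ua)
  have hub : u ≠ b := fun h => G.irrefl (h ▸ hAdj_ub)
  have hO1 : powerIter 1 G {u} 1 = {u, a, b} := by
    rw [powerIter_one, closedNbhd_singleton, hNu]
  have hO1card : (powerIter 1 G {u} 1).ncard = 3 := by
    rw [hO1]
    rw [Set.ncard_insert_of_notMem (s := ({a, b} : Set V)) (by
        intro h; rcases h with h | h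
        · exact hua h
        · exact hub h) (Set.toFinite _)]
    rw [Set.ncard_insert_of_notMem (s := ({b} : Set V)) (by
        intro h; exact hab h) (Set.toFinite _), Set.ncard_singleton]
  have huc : (Set.univ : Set V).ncard = Fintype.card V := by
    rw [Set.ncard_univ, Nat.card_eq_fintype_card]
  have hOne : ∀ t, t < Fintype.card V - 2 → powerIter 1 G {u} t ≠ Set.univ := by
    intro t ht h
    have := pptOf_le h
    omega
  have hOuniv : powerIter 1 G {u} (Fintype.card V - 2) = Set.univ := by
    rw [← hpptu]; exact hu.powerIter_pptOf
  have hgrow : ∀ t, 1 ≤ t → ∀ d, t + d ≤ Fintype.card V - 2 →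
      (powerIter 1 G {u} t).ncard + d ≤ (powerIter 1 G {u} (t + d)).ncard := by
    intro t ht d
    induction d with
    | zero => simp
    | succ m ih =>
      intro hd
      have h1 := ih (by omega)
      have hne := hOne (t + m) (by omega)
      have h2 := Set.ncard_lt_ncard (powerIter_ssubset hu (by omega) hne) (Set.toFinite _)
      have h3 : t + (m + 1) = (t + m) + 1 := by ring
      rw [h3]
      omega
  have hsize : ∀ t, 1 ≤ t → t ≤ Fintype.card V - 2 →
      (powerIter 1 G {u} t).ncard = t + 2 := by
    intro t ht1 ht2
    have hlow : t + 2 ≤ (powerIter 1 G {u} t).ncard := by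
      have h0 := hgrow 1 le_rfl (t - 1) (by omega)
      rw [hO1card, show 1 + (t - 1) = t by omega] at h0
      omega
    have hup : (powerIter 1 G {u} t).ncard ≤ t + 2 := by
      have h0 := hgrow t ht1 (Fintype.card V - 2 - t) (by omega)
      rw [show t + (Fintype.card V - 2 - t) = Fintype.card V - 2 by omega, hOuniv, huc] at h0
      omega
    omega
  have hstep : ∀ t, 1 ≤ t → t ≤ Fintype.card V - 3 →
      ∃ z, z ∉ powerIter 1 G {u} t ∧
        powerIter 1 G {u} (t + 1) = insert z (powerIter 1 G {u} t) := by
    intro t ht1 ht2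
    have hne := hOne t (by omega)
    obtain ⟨z, hz1, hz2⟩ := Set.exists_of_ssubset (powerIter_ssubset hu ht1 hne)
    refine ⟨z, hz2, ?_⟩
    have hsub : insert z (powerIter 1 G {u} t) ⊆ powerIter 1 G {u} (t + 1) := by
      intro w hw
      rcases hw with rfl | hw
      · exact hz1
      · exact powerIter_subset_succ hw
    have hc1 : (insert z (powerIter 1 G {u} t)).ncard = t + 3 := by
      rw [Set.ncard_insert_of_notMem hz2 (Set.toFinite _), hsize t ht1 (by omega)]
    have hc2 : (powerIter 1 G {u} (t + 1)).ncard = t + 3 := by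
      rw [hsize (t + 1) (by omega) (by omega)]
    exact (Set.eq_of_subset_of_ncard_le hsub (by omega) (Set.toFinite _)).symm
  have hkill : ∀ x : V, IsPDS 1 G {x} → pptOf 1 G {x} + 1 ≤ Fintype.card V - 2 → False := by
    intro x hx hppt
    have := hsingle x hx
    omega
  have hppt2 : 2 ≤ pptOf 1 G {u} := by omega
  -- a and b are not adjacent
  have hnab : ¬ G.Adj a b := by
    intro hadj
    obtain ⟨z2, hz2n, hO2⟩ := hstep 1 le_rfl (by omega)
    obtain ⟨v0, hv0, hforce⟩ := exists_forcer le_rfl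
      (show z2 ∈ powerIter 1 G {u} (1 + 1) by rw [hO2]; exact Set.mem_insert _ _) hz2n
    have hzmem : z2 ∈ G.neighborSet v0 \ powerIter 1 G {u} 1 := by rw [hforce]; rfl
    have hzadj : G.Adj v0 z2 := hzmem.1
    have hsubCN : powerIter 1 G {u} 2 ⊆ closedNbhd G {v0} := by
      rw [show (2:ℕ) = 1 + 1 from rfl, hO2, closedNbhd_singleton]
      rw [hO1] at hv0 ⊢
      intro w hw
      rcases hw with rfl | rfl | rfl | rfl
      · exact Set.mem_insert_iff.mpr (Or.inr hzadj)
      · -- w = u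
        rcases hv0 with rfl | rfl | rfl
        · exact Set.mem_insert _ _
        · exact Set.mem_insert_iff.mpr (Or.inr hAdj_ua.symm)
        · exact Set.mem_insert_iff.mpr (Or.inr hAdj_ub.symm)
      · -- w = a
        rcases hv0 with rfl | rfl | rfl
        · exact Set.mem_insert_iff.mpr (Or.inr hAdj_ua)
        · exact Set.mem_insert _ _
        · exact Set.mem_insert_iff.mpr (Or.inr hadj.symm)
      · -- w = b
        rcases hv0 with rfl | rfl | rfl
        · exact Set.mem_insert_iff.mpr (Or.inr hAdj_ub)
        · exact Set.mem_insert_iff.mpr (Or.inr hadj)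
        · exact Set.mem_insert _ _
    have hsub : powerIter 1 G {u} 2 ⊆ powerIter 1 G {v0} 1 := by
      rw [powerIter_one]; exact hsubCN
    have hshift := shift_pds hu (by omega) (by omega) hppt2 hsub
    exact hkill v0 hshift.1 (by omega)
  -- the path invariant, by induction
  have hInv : ∀ t, 1 ≤ t → t ≤ Fintype.card V - 2 →
      ∃ e : ℕ → V, PathInv G (powerIter 1 G {u} t) (t + 2) e := by
    intro t ht1
    induction t, ht1 using Nat.le_induction with
    | base =>
      intro _
      refine ⟨fun i => if i = 0 then a else if i = 1 then u else b, ?_, ?_, ?_, ?_⟩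
      · intro i j hi hj hij
        interval_cases i <;> interval_cases j <;> simp_all
      · intro x
        rw [hO1]
        constructor
        · rintro (rfl | rfl | rfl)
          · exact ⟨1, by omega, rfl⟩
          · exact ⟨0, by omega, rfl⟩
          · exact ⟨2, by omega, rfl⟩
        · rintro ⟨i, hi, rfl⟩
          interval_cases i
          · exact Or.inr (Or.inl rfl)
          · exact Or.inl rfl
          · exact Or.inr (Or.inr rfl)
      · intro i j hi hj
        interval_cases i <;> interval_cases j
        · exact iff_of_false G.irrefl (by omega)
        · exact iff_of_true hAdj_ua.symm (by omega)
        · exact iff_of_false hnab (by omega)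
        · exact iff_of_true hAdj_ua (by omega)
        · exact iff_of_false G.irrefl (by omega)
        · exact iff_of_true hAdj_ub (by omega)
        · exact iff_of_false (fun h => hnab h.symm) (by omega)
        · exact iff_of_true hAdj_ub.symm (by omega)
        · exact iff_of_false G.irrefl (by omega)
      · intro i h0 hi1 y hadj
        have hieq : i = 1 := by omega
        subst hieq
        have : y ∈ G.neighborSet u := hadj
        rw [hNu] at this
        rw [hO1]
        rcases this with rfl | rfl
        · exact Or.inr (Or.inl rfl)
        · exact Or.inr (Or.inr rfl)
    | succ t ht ih =>
      intro ht2
      obtain ⟨e0, hPI0⟩ := ih (by omega)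
      obtain ⟨z, hzO, hOt1⟩ := hstep t ht (by omega)
      obtain ⟨v0, hv0, hforce⟩ := exists_forcer ht
        (show z ∈ powerIter 1 G {u} (t + 1) by rw [hOt1]; exact Set.mem_insert _ _) hzO
      -- main construction, assuming the forcer is the last vertex of the path
      have main : ∀ e : ℕ → V, PathInv G (powerIter 1 G {u} t) (t + 2) e →
          G.neighborSet (e (t + 1)) \ powerIter 1 G {u} t = {z} →
          ∃ f : ℕ → V, PathInv G (powerIter 1 G {u} (t + 1)) (t + 3) f := by
        intro e hPI hforce'
        obtain ⟨hinj, hcov, hadjE, hsat⟩ := hPI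
        have hzmem : z ∈ G.neighborSet (e (t + 1)) \ powerIter 1 G {u} t := by
          rw [hforce']; rfl
        have hq_adj_z : G.Adj (e (t + 1)) z := hzmem.1
        have hmemO : ∀ j, j < t + 2 → e j ∈ powerIter 1 G {u} t :=
          fun j hj => (hcov _).mpr ⟨j, hj, rfl⟩
        have hqnbr : ∀ y, G.Adj (e (t + 1)) y ↔ (y = e t ∨ y = z) := by
          intro y
          constructor
          · intro hadj
            by_cases hy : y ∈ powerIter 1 G {u} t
            · obtain ⟨j, hj, rfl⟩ := (hcov y).mp hy
              have hj' := (hadjE (t + 1) j (by omega) hj).mp hadj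
              have hjt : j = t := by omega
              subst hjt
              exact Or.inl rfl
            · have h2 : y ∈ G.neighborSet (e (t + 1)) \ powerIter 1 G {u} t := ⟨hadj, hy⟩
              rw [hforce'] at h2
              exact Or.inr h2
          · rintro (rfl | rfl)
            · exact (hadjE (t + 1) t (by omega) (by omega)).mpr (Or.inr rfl)
            · exact hq_adj_z
        by_cases hz0 : G.Adj (e 0) z
        · -- kill branch: impossible
          exfalso
          -- (1) z is a singleton PDS, via a walk from z back along the path
          set g : ℕ → V := fun i => if i = t + 2 then z else e i with hg
          have hgz : g (t + 2) = z := by rw [hg]; simp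
          have hge : ∀ i, i ≠ t + 2 → g i = e i := by intro i h; rw [hg]; simp [h]
          have hgchain : ∀ i, i + 1 < t + 3 → G.Adj (g i) (g (i + 1)) := by
            intro i hi
            by_cases h1 : i + 1 = t + 2
            · rw [hge i (by omega), h1, hgz, show i = t + 1 by omega]
              exact hq_adj_z
            · rw [hge i (by omega), hge (i + 1) h1]
              exact (hadjE i (i + 1) (by omega) (by omega)).mpr (Or.inl rfl)
          have hgint : ∀ i, 0 < i → i + 1 < t + 3 → i ≠ t + 2 → ∀ y, G.Adj (g i) y →
              (y = g (i - 1) ∨ y = g (i + 1)) := by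
            intro i h0 hi1 hik y hadj
            rw [hge i hik] at hadj
            by_cases hi' : i = t + 1
            · subst hi'
              rcases (hqnbr y).mp hadj with rfl | rfl
              · left; rw [show t + 1 - 1 = t by omega, hge t (by omega)]
              · right; rw [show t + 1 + 1 = t + 2 by omega, hgz]
            · have hy := hsat i h0 (by omega) y hadj
              obtain ⟨j, hj, rfl⟩ := (hcov y).mp hy
              rcases (hadjE i j (by omega) hj).mp hadj with h | h
              · right; rw [hge (i + 1) (by omega), h]
              · left; rw [hge (i - 1) (by omega)]; congr 1; omega
          have hfr1 := fronts (G := G) (m := t + 3) g (t + 2) (by omega) hgchain hgint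
          rw [hgz] at hfr1
          have hsub_z : powerIter 1 G {u} (t + 1) ⊆ powerIter 1 G {z} (t + 2) := by
            rw [hOt1]
            intro x hx
            rcases hx with rfl | hx
            · have h' := hfr1 (t + 2) (by omega) (t + 2) (by omega) (by omega) (by omega)
              rwa [hgz] at h'
            · obtain ⟨i, hi, rfl⟩ := (hcov x).mp hx
              have h' := hfr1 (t + 2) (by omega) i (by omega) (by omega) (by omega)
              rwa [hge i (by omega)] at h'
          have hzPDS := (shift_pds hu (a := t + 1) (b := t + 2) (by omega) (by omega)
            (by omega) hsub_z).1
          -- (2) N(z) = {e 0, e (t+1)}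
          have hne0q : e 0 ≠ e (t + 1) := by
            intro h
            have := hinj 0 (t + 1) (by omega) (by omega) h
            omega
          have hNzcard : (G.neighborSet z).ncard ≤ 2 := by
            have hzdeg := hdeg z hzPDS
            have h1 : closedNbhd G {z} = insert z (G.neighborSet z) := closedNbhd_singleton
            have h2 : (insert z (G.neighborSet z)).ncard = (G.neighborSet z).ncard + 1 :=
              Set.ncard_insert_of_notMem
                (fun h => G.irrefl ((G.mem_neighborSet z z).mp h)) (Set.toFinite _)
            rw [h1, h2] at hzdeg
            omega
          have hsubz2 : ({e 0, e (t + 1)} : Set V) ⊆ G.neighborSet z := by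
            intro w hw
            rcases hw with rfl | rfl
            · exact hz0.symm
            · exact hq_adj_z.symm
          have hNzeq : G.neighborSet z = {e 0, e (t + 1)} :=
            (Set.eq_of_subset_of_ncard_le hsubz2
              (by rw [Set.ncard_pair hne0q]; exact hNzcard) (Set.toFinite _)).symm
          have hNz : ∀ y, G.Adj z y ↔ (y = e 0 ∨ y = e (t + 1)) := by
            intro y
            constructor
            · intro h
              have h' : y ∈ G.neighborSet z := h
              rw [hNzeq] at h'
              exact h'
            · intro h
              have h' : y ∈ G.neighborSet z := by rw [hNzeq]; exact h
              exact h'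
          -- (3) e 0 is a singleton PDS, via a walk starting at e 0
          set f2 : ℕ → V := fun i => if i = 0 then z else e (i - 1) with hf2
          have hf2z : f2 0 = z := by rw [hf2]; simp
          have hf2e : ∀ i, i ≠ 0 → f2 i = e (i - 1) := by intro i h; rw [hf2]; simp [h]
          have hf2chain : ∀ i, i + 1 < t + 3 → G.Adj (f2 i) (f2 (i + 1)) := by
            intro i hi
            by_cases h1 : i = 0
            · subst h1
              rw [hf2z, hf2e 1 (by omega), show (1 : ℕ) - 1 = 0 from rfl]
              exact hz0.symm
            · rw [hf2e i h1, hf2e (i + 1) (by omega), show i + 1 - 1 = i from rfl]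
              exact (hadjE (i - 1) i (by omega) (by omega)).mpr (Or.inl (by omega))
          have hf2int : ∀ i, 0 < i → i + 1 < t + 3 → i ≠ 1 → ∀ y, G.Adj (f2 i) y →
              (y = f2 (i - 1) ∨ y = f2 (i + 1)) := by
            intro i h0 hi1 hik y hadj
            rw [hf2e i (by omega)] at hadj
            have hy := hsat (i - 1) (by omega) (by omega) y hadj
            obtain ⟨j, hj, rfl⟩ := (hcov y).mp hy
            rcases (hadjE (i - 1) j (by omega) hj).mp hadj with h | h
            · right; rw [hf2e (i + 1) (by omega)]; congr 1; omega
            · left; rw [hf2e (i - 1) (by omega)]; congr 1; omega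
          have hfr2 := fronts (G := G) (m := t + 3) f2 1 (by omega) hf2chain hf2int
          have hf2one : f2 1 = e 0 := by
            rw [hf2e 1 (by omega)]
          rw [hf2one] at hfr2
          have hsub_e0 : powerIter 1 G {u} (t + 1) ⊆ powerIter 1 G {e 0} (t + 1) := by
            rw [hOt1]
            intro x hx
            rcases hx with rfl | hx
            · have h' := hfr2 (t + 1) (by omega) 0 (by omega) (by omega) (by omega)
              rwa [hf2z] at h'
            · obtain ⟨i, hi, rfl⟩ := (hcov x).mp hx
              have h' := hfr2 (t + 1) (by omega) (i + 1) (by omega) (by omega) (by omega)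
              rwa [hf2e (i + 1) (by omega), show i + 1 - 1 = i from rfl] at h'
          have he0PDS := (shift_pds hu (a := t + 1) (b := t + 1) (by omega) (by omega)
            (by omega) hsub_e0).1
          -- (4) N(e 0) = {e 1, z}
          have he1z : e 1 ≠ z := fun h => hzO (h ▸ hmemO 1 (by omega))
          have hNe0card : (G.neighborSet (e 0)).ncard ≤ 2 := by
            have he0deg := hdeg (e 0) he0PDS
            have h1 : closedNbhd G {e 0} = insert (e 0) (G.neighborSet (e 0)) :=
              closedNbhd_singleton
            have h2 : (insert (e 0) (G.neighborSet (e 0))).ncard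
                = (G.neighborSet (e 0)).ncard + 1 :=
              Set.ncard_insert_of_notMem
                (fun h => G.irrefl ((G.mem_neighborSet (e 0) (e 0)).mp h)) (Set.toFinite _)
            rw [h1, h2] at he0deg
            omega
          have hsube0 : ({e 1, z} : Set V) ⊆ G.neighborSet (e 0) := by
            intro w hw
            rcases hw with rfl | rfl
            · exact (hadjE 0 1 (by omega) (by omega)).mpr (Or.inl rfl)
            · exact hz0
          have hNe0eq : G.neighborSet (e 0) = {e 1, z} :=
            (Set.eq_of_subset_of_ncard_le hsube0
              (by rw [Set.ncard_pair he1z]; exact hNe0card) (Set.toFinite _)).symm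
          -- (5) O(t+1) is closed, hence the whole graph
          have hclosed : ∀ x ∈ powerIter 1 G {u} (t + 1), ∀ y, G.Adj x y →
              y ∈ powerIter 1 G {u} (t + 1) := by
            intro x hx y hxy
            rw [hOt1] at hx ⊢
            rcases hx with rfl | hx
            · rcases (hNz y).mp hxy with rfl | rfl
              · exact Or.inr (hmemO 0 (by omega))
              · exact Or.inr (hmemO (t + 1) (by omega))
            · obtain ⟨i, hi, rfl⟩ := (hcov x).mp hx
              by_cases h1 : i = 0
              · subst h1
                have h' : y ∈ G.neighborSet (e 0) := hxy
                rw [hNe0eq] at h'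
                rcases h' with rfl | rfl
                · exact Or.inr (hmemO 1 (by omega))
                · exact Or.inl rfl
              · by_cases h2 : i = t + 1
                · subst h2
                  rcases (hqnbr y).mp hxy with rfl | rfl
                  · exact Or.inr (hmemO t (by omega))
                  · exact Or.inl rfl
                · exact Or.inr (hsat i (by omega) (by omega) y hxy)
          have huniv1 : powerIter 1 G {u} (t + 1) = Set.univ :=
            closed_eq_univ hconn ⟨z, by rw [hOt1]; exact Set.mem_insert _ _⟩ hclosed
          -- (6) every vertex has exactly two known neighbours
          have hNx : ∀ x : V, ∃ y1 y2 : V, y1 ≠ y2 ∧ (∀ y, G.Adj x y ↔ (y = y1 ∨ y = y2)) := by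
            intro x
            have hx : x ∈ powerIter 1 G {u} (t + 1) := by rw [huniv1]; trivial
            rw [hOt1] at hx
            rcases hx with rfl | hx
            · exact ⟨e 0, e (t + 1), hne0q, hNz⟩
            · obtain ⟨i, hi, rfl⟩ := (hcov x).mp hx
              by_cases h1 : i = 0
              · subst h1
                refine ⟨e 1, z, he1z, ?_⟩
                intro y
                constructor
                · intro h
                  have h' : y ∈ G.neighborSet (e 0) := h
                  rw [hNe0eq] at h'
                  exact h'
                · rintro (rfl | rfl)
                  · exact (hadjE 0 1 (by omega) (by omega)).mpr (Or.inl rfl)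
                  · exact hz0
              · by_cases h2 : i = t + 1
                · subst h2
                  exact ⟨e t, z, fun h => hzO (h ▸ hmemO t (by omega)), hqnbr⟩
                · refine ⟨e (i - 1), e (i + 1), ?_, ?_⟩
                  · intro h
                    have := hinj (i - 1) (i + 1) (by omega) (by omega) h
                    omega
                  · intro y
                    constructor
                    · intro h
                      have hy := hsat i (by omega) (by omega) y h
                      obtain ⟨j, hj, rfl⟩ := (hcov y).mp hy
                      rcases (hadjE i j (by omega) hj).mp h with hh | hh
                      · right; congr 1
                      · left; congr 1; omega
                    · rintro (rfl | rfl)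
                      · exact (hadjE i (i - 1) (by omega) (by omega)).mpr (Or.inr (by omega))
                      · exact (hadjE i (i + 1) (by omega) (by omega)).mpr (Or.inl rfl)
          -- (7) back at the start: both a and b force the same vertex, giving a 4-cycle
          obtain ⟨z2, hz2n, hO2⟩ := hstep 1 le_rfl (by omega)
          have hpick : ∀ x : V, G.Adj x u →
              ∃ s, s ≠ u ∧ (∀ y, G.Adj x y ↔ (y = u ∨ y = s)) := by
            intro x hxu
            obtain ⟨y1, y2, hyne, hNx'⟩ := hNx x
            rcases (hNx' u).mp hxu with h | h
            · refine ⟨y2, ?_, ?_⟩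
              · intro hh
                exact hyne (h.symm.trans hh.symm)
              · intro y
                rw [hNx' y, ← h]
            · refine ⟨y1, ?_, ?_⟩
              · intro hh
                exact hyne (hh.trans h)
              · intro y
                rw [hNx' y, ← h]
                exact or_comm
          obtain ⟨sa, hsa_ne, hNa⟩ := hpick a hAdj_ua.symm
          obtain ⟨sb, hsb_ne, hNb⟩ := hpick b hAdj_ub.symm
          have hsa_adj : G.Adj a sa := (hNa sa).mpr (Or.inr rfl)
          have hsb_adj : G.Adj b sb := (hNb sb).mpr (Or.inr rfl)
          have hgeneric : ∀ x sx : V, (∀ y, G.Adj x y ↔ (y = u ∨ y = sx)) → sx ≠ u →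
              G.Adj x sx → x = a ∨ x = b → sx = z2 := by
            intro x sx hNxx hsxu hxsx hxab
            have hsx_notin : sx ∉ powerIter 1 G {u} 1 := by
              rw [hO1]
              intro h
              rcases h with rfl | rfl | rfl
              · exact hsxu rfl
              · rcases hxab with rfl | rfl
                · exact G.irrefl hxsx
                · exact hnab hxsx.symm
              · rcases hxab with rfl | rfl
                · exact hnab hxsx
                · exact G.irrefl hxsx
            have hdiff : G.neighborSet x \ powerIter 1 G {u} 1 = {sx} := by
              ext y
              constructor
              · rintro ⟨hy1, hy2⟩
                rcases (hNxx y).mp hy1 with rfl | rfl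
                · exact absurd (by rw [hO1]; exact Set.mem_insert _ _) hy2
                · rfl
              · rintro rfl
                exact ⟨hxsx, hsx_notin⟩
            have hsx_in2 : sx ∈ powerIter 1 G {u} (1 + 1) := by
              rw [powerIter_succ_of_pos le_rfl]
              refine Set.mem_union_right _ ⟨x, ?_, ⟨hxsx, hsx_notin⟩, ?_⟩
              · rw [hO1]
                rcases hxab with rfl | rfl
                · exact Set.mem_insert_iff.mpr (Or.inr (Set.mem_insert _ _))
                · exact Set.mem_insert_iff.mpr (Or.inr (Set.mem_insert_iff.mpr (Or.inr rfl)))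
              · rw [hdiff, Set.ncard_singleton]
            rw [hO2] at hsx_in2
            rcases hsx_in2 with rfl | h
            · rfl
            · exact absurd h hsx_notin
          have hsa_eq : sa = z2 := hgeneric a sa hNa hsa_ne hsa_adj (Or.inl rfl)
          have hsb_eq : sb = z2 := hgeneric b sb hNb hsb_ne hsb_adj (Or.inr rfl)
          have hz2a : G.Adj z2 a := by rw [← hsa_eq]; exact hsa_adj.symm
          have hz2b : G.Adj z2 b := by rw [← hsb_eq]; exact hsb_adj.symm
          have hNz2' : ∀ y, G.Adj z2 y → (y = a ∨ y = b) := by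
            intro y hy
            obtain ⟨y1, y2, hyne, hNz2⟩ := hNx z2
            have ha' := (hNz2 a).mp hz2a
            have hb' := (hNz2 b).mp hz2b
            have hy' := (hNz2 y).mp hy
            rcases ha' with h1 | h1 <;> rcases hb' with h2 | h2
            · exact absurd (h1.trans h2.symm) hab
            · rcases hy' with h3 | h3
              · exact Or.inl (h3.trans h1.symm)
              · exact Or.inr (h3.trans h2.symm)
            · rcases hy' with h3 | h3
              · exact Or.inr (h3.trans h2.symm)
              · exact Or.inl (h3.trans h1.symm)
            · exact absurd (h1.trans h2.symm) hab
          have hDclosed : ∀ x ∈ ({u, a, b, z2} : Set V), ∀ y, G.Adj x y →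
              y ∈ ({u, a, b, z2} : Set V) := by
            intro x hx y hxy
            rcases hx with rfl | rfl | rfl | rfl
            · have h' : y ∈ G.neighborSet x := hxy
              rw [hNu] at h'
              rcases h' with rfl | rfl
              · exact Or.inr (Or.inl rfl)
              · exact Or.inr (Or.inr (Or.inl rfl))
            · rcases (hNa y).mp hxy with rfl | rfl
              · exact Or.inl rfl
              · rw [hsa_eq]
                exact Or.inr (Or.inr (Or.inr rfl))
            · rcases (hNb y).mp hxy with rfl | rfl
              · exact Or.inl rfl
              · rw [hsb_eq]
                exact Or.inr (Or.inr (Or.inr rfl))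
            · rcases hNz2' y hxy with rfl | rfl
              · exact Or.inr (Or.inl rfl)
              · exact Or.inr (Or.inr (Or.inl rfl))
          have hDuniv := closed_eq_univ hconn ⟨u, Set.mem_insert _ _⟩ hDclosed
          have hDcard : ({u, a, b, z2} : Set V).ncard ≤ 4 := by
            calc ({u, a, b, z2} : Set V).ncard
                ≤ ({a, b, z2} : Set V).ncard + 1 := Set.ncard_insert_le _ _
              _ ≤ (({b, z2} : Set V).ncard + 1) + 1 := by
                  have := Set.ncard_insert_le a ({b, z2} : Set V)
                  omega
              _ ≤ ((({z2} : Set V).ncard + 1) + 1) + 1 := by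
                  have := Set.ncard_insert_le b ({z2} : Set V)
                  omega
              _ ≤ 4 := by rw [Set.ncard_singleton]
          rw [hDuniv, huc] at hDcard
          omega
        · -- extension
          set f : ℕ → V := fun i => if i = t + 2 then z else e i with hf
          have hfz : f (t + 2) = z := by rw [hf]; simp
          have hfe : ∀ i, i ≠ t + 2 → f i = e i := by
            intro i h; rw [hf]; simp [h]
          have hcase : ∀ i', i' < t + 2 → (G.Adj (e i') z ↔ i' = t + 1) := by
            intro i' hi'
            constructor
            · intro h
              by_cases h1 : i' = t + 1
              · exact h1
              · exfalso
                by_cases h2 : i' = 0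
                · subst h2; exact hz0 h
                · exact hzO (hsat i' (by omega) (by omega) z h)
            · intro h1
              subst h1
              exact hq_adj_z
          refine ⟨f, ?_, ?_, ?_, ?_⟩
          · intro i j hi hj hij
            by_cases h1 : i = t + 2 <;> by_cases h2 : j = t + 2
            · omega
            · rw [h1, hfz, hfe j h2] at hij
              exact absurd (hij ▸ hmemO j (by omega)) hzO
            · rw [h2, hfz, hfe i h1] at hij
              exact absurd (hij.symm ▸ hmemO i (by omega)) hzO
            · rw [hfe i h1, hfe j h2] at hij
              exact hinj i j (by omega) (by omega) hij
          · intro x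
            rw [hOt1]
            constructor
            · rintro (rfl | hx)
              · exact ⟨t + 2, by omega, hfz⟩
              · obtain ⟨i, hi, rfl⟩ := (hcov x).mp hx
                exact ⟨i, by omega, hfe i (by omega)⟩
            · rintro ⟨i, hi, rfl⟩
              by_cases h1 : i = t + 2
              · rw [h1, hfz]; exact Set.mem_insert _ _
              · rw [hfe i h1]; exact Set.mem_insert_iff.mpr (Or.inr (hmemO i (by omega)))
          · intro i j hi hj
            by_cases h1 : i = t + 2 <;> by_cases h2 : j = t + 2
            · rw [h1, h2, hfz]
              exact iff_of_false G.irrefl (by omega)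
            · rw [h1, hfz, hfe j h2]
              rw [G.adj_comm, hcase j (by omega)]
              omega
            · rw [h2, hfz, hfe i h1]
              rw [hcase i (by omega)]
              omega
            · rw [hfe i h1, hfe j h2]
              exact hadjE i j (by omega) (by omega)
          · intro i h0 hi1 y hadj
            rw [hOt1]
            by_cases h1 : i = t + 1
            · rw [hfe i (by omega), h1] at hadj
              rcases (hqnbr y).mp hadj with rfl | rfl
              · exact Set.mem_insert_iff.mpr (Or.inr (hmemO t (by omega)))
              · exact Set.mem_insert _ _
            · rw [hfe i (by omega)] at hadj
              exact Set.mem_insert_iff.mpr (Or.inr (hsat i h0 (by omega) y hadj))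
      -- locate the forcer at an end of the path
      obtain ⟨hinj, hcov, hadjE, hsat⟩ := hPI0
      obtain ⟨i0, hi0, hi0e⟩ := (hcov v0).mp hv0
      have hzadj : G.Adj v0 z := by
        have : z ∈ G.neighborSet v0 \ powerIter 1 G {u} t := by rw [hforce]; rfl
        exact this.1
      have hi0end : i0 = 0 ∨ i0 = t + 1 := by
        by_contra hcon
        push_neg at hcon
        exact hzO (hsat i0 (by omega) (by omega) z (hi0e ▸ hzadj))
      rcases hi0end with h0 | h0
      · -- forcer at the left end: use the reversed path
        have hPIr := PathInv.reverse (G := G) ⟨hinj, hcov, hadjE, hsat⟩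
        apply main _ hPIr
        show G.neighborSet (e0 (t + 2 - 1 - (t + 1))) \ _ = _
        rw [show t + 2 - 1 - (t + 1) = 0 by omega, show e0 0 = v0 by rw [← h0, hi0e]]
        exact hforce
      · apply main e0 ⟨hinj, hcov, hadjE, hsat⟩
        rw [show e0 (t + 1) = v0 by rw [← h0, hi0e]]
        exact hforce
  -- endgame: the whole graph is a path; its middle vertex has small propagation time
  obtain ⟨e, hinj, hcov, hadjE, hsat⟩ := hInv (Fintype.card V - 2) (by omega) le_rfl
  set N := Fintype.card V with hN
  have hm : N - 2 + 2 = N := by omega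
  have hcov' : ∀ x : V, ∃ i, i < N ∧ e i = x := by
    intro x
    have : x ∈ powerIter 1 G {u} (N - 2) := by rw [hOuniv]; trivial
    obtain ⟨i, hi, rfl⟩ := (hcov x).mp this
    exact ⟨i, by omega, rfl⟩
  have hfr := fronts (G := G) (m := N) e (N / 2) (by omega)
    (fun i hi => (hadjE i (i + 1) (by omega) (by omega)).mpr (Or.inl rfl))
    (by
      intro i h0 hi1 hik y hadj
      obtain ⟨j, hj, rfl⟩ := hcov' y
      have := (hadjE i j (by omega) (by omega)).mp hadj
      rcases this with h | h
      · exact Or.inr (by rw [h])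
      · exact Or.inl (by congr 1; omega))
  have huniv2 : powerIter 1 G {e (N / 2)} (N - 3) = Set.univ := by
    apply Set.eq_univ_of_forall
    intro x
    obtain ⟨i, hi, rfl⟩ := hcov' x
    exact hfr (N - 3) (by omega) i (by omega) (by omega) (by omega)
  exact hkill (e (N / 2)) ⟨N - 3, huniv2⟩ (by have := pptOf_le huniv2; omega)

end PowerProp


namespace PowerProp
open SimpleGraph
variable {V : Type*} [Fintype V] {G : SimpleGraph V}

lemma exists_adj (hconn : G.Connected) (h2 : 2 ≤ Fintype.card V) (x : V) :
    ∃ y, G.Adj x y := by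
  have hne : ({x} : Set V) ≠ Set.univ := by
    intro h
    have : (Set.univ : Set V).ncard = 1 := by rw [← h]; exact Set.ncard_singleton x
    rw [Set.ncard_univ, Nat.card_eq_fintype_card] at this
    omega
  obtain ⟨x', hx', y, _, hadj⟩ :=
    exists_boundary_edge (D := ({x} : Set V)) hconn ⟨x, rfl⟩ hne
  have : x' = x := hx'
  subst this
  exact ⟨y, hadj⟩

theorem ppt_le_card_sub_three (G : SimpleGraph V) (hconn : G.Connected)
    (h5 : 5 ≤ Fintype.card V) : ppt 1 G ≤ Fintype.card V - 3 := by
  by_contra hp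
  push_neg at hp
  have hp' : Fintype.card V - 2 ≤ ppt 1 G := by omega
  obtain ⟨S, hSmin, hSppt⟩ := exists_ppt_witness (k := 1) (G := G)
  have hSpds := hSmin.1
  have hppS : pptOf 1 G S = ppt 1 G := hSppt
  have hSne : S.Nonempty := by
    rcases Set.eq_empty_or_nonempty S with rfl | h
    · exfalso
      obtain ⟨l, hl⟩ := hSpds
      rw [powerIter_empty] at hl
      have : (Set.univ : Set V).ncard = 0 := by rw [← hl]; simp
      rw [Set.ncard_univ, Nat.card_eq_fintype_card] at this
      omega
    · exact h
  have hNS_bound : (closedNbhd G S).ncard ≤ 3 := by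
    by_contra h4
    push_neg at h4
    have := pptOf_le_card_bound hSpds
    omega
  have hNSne : closedNbhd G S ≠ Set.univ := by
    intro h
    have h1 : powerIter 1 G S 1 = Set.univ := by rw [powerIter_one]; exact h
    have := pptOf_le h1
    omega
  have hSneU : S ≠ Set.univ := by
    intro h
    exact hNSne (Set.eq_univ_of_univ_subset (h ▸ subset_closedNbhd))
  obtain ⟨x, hxS, y, hyS, hxy⟩ := exists_boundary_edge hconn hSne hSneU
  have hyNS : y ∈ closedNbhd G S := mem_closedNbhd_of_adj hxS hxy
  have hcard_lt : S.ncard < (closedNbhd G S).ncard :=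
    Set.ncard_lt_ncard ⟨subset_closedNbhd, fun h => hyS (h hyNS)⟩ (Set.toFinite _)
  have hScard_pos : 0 < S.ncard := (Set.ncard_pos (Set.toFinite _)).mpr hSne
  have hpd : pdNum 1 G = S.ncard := hSmin.2.symm
  have hppt_big : 3 ≤ pptOf 1 G S := by omega
  rcases (by omega : S.ncard = 1 ∨ S.ncard = 2) with h1 | h2
  · -- |S| = 1
    obtain ⟨u, rfl⟩ := Set.ncard_eq_one.mp h1
    have hpd1 : pdNum 1 G = 1 := by rw [hpd, h1]
    have hsingle : ∀ x : V, IsPDS 1 G {x} → Fintype.card V - 2 ≤ pptOf 1 G {x} := by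
      intro x hx
      have : IsMinPDS 1 G {x} := ⟨hx, by rw [Set.ncard_singleton, hpd1]⟩
      have := ppt_le_pptOf this
      omega
    have hdeg : ∀ x : V, IsPDS 1 G {x} → (closedNbhd G {x}).ncard ≤ 3 := by
      intro x hx
      by_contra h4
      push_neg at h4
      have hb := pptOf_le_card_bound hx
      have := hsingle x hx
      omega
    have hNu_card : (G.neighborSet u).ncard + 1 ≤ 3 := by
      have heq : closedNbhd G {u} = insert u (G.neighborSet u) := closedNbhd_singleton
      have h2 : (insert u (G.neighborSet u)).ncard = (G.neighborSet u).ncard + 1 :=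
        Set.ncard_insert_of_notMem (fun h => G.irrefl ((G.mem_neighborSet u u).mp h))
          (Set.toFinite _)
      have := hNS_bound
      rw [heq, h2] at this
      exact this
    have hNu_pos : 0 < (G.neighborSet u).ncard := by
      obtain ⟨y0, hy0⟩ := exists_adj hconn (by omega) u
      exact (Set.ncard_pos (Set.toFinite _)).mpr ⟨y0, hy0⟩
    rcases (by omega : (G.neighborSet u).ncard = 1 ∨ (G.neighborSet u).ncard = 2) with hd1 | hd2
    · -- u is a leaf with unique neighbor y0
      obtain ⟨y0, hy0⟩ := Set.ncard_eq_one.mp hd1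
      have hadj_uy : G.Adj u y0 := by
        have : y0 ∈ G.neighborSet u := by rw [hy0]; rfl
        exact this
      have hO1 : powerIter 1 G {u} 1 = {u, y0} := by
        rw [powerIter_one, closedNbhd_singleton, hy0]
      have hsub : powerIter 1 G {u} 2 ⊆ powerIter 1 G {y0} 1 := by
        rw [show (2:ℕ) = 1 + 1 from rfl, powerIter_succ_of_pos le_rfl]
        have hgoal : powerIter 1 G {y0} 1 = insert y0 (G.neighborSet y0) := by
          rw [powerIter_one, closedNbhd_singleton]
        rintro w (hw | ⟨v, hv, ⟨hadj, hns⟩, _⟩)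
        · rw [hO1] at hw
          rw [hgoal]
          rcases hw with rfl | rfl
          · exact Set.mem_insert_iff.mpr (Or.inr hadj_uy.symm)
          · exact Set.mem_insert _ _
        · rw [hO1] at hv
          rw [hgoal]
          rcases hv with rfl | rfl
          · exfalso
            have : w = y0 := by rw [hy0] at hadj; exact hadj
            apply hns
            rw [hO1, this]
            exact Set.mem_insert_iff.mpr (Or.inr rfl)
          · exact Set.mem_insert_iff.mpr (Or.inr hadj)
      have hshift := shift_pds hSpds (by omega) (by omega)
        (by omega : 2 ≤ pptOf 1 G {u}) hsub
      have h1 := ppt_le_pptOf (⟨hshift.1, by rw [Set.ncard_singleton, hpd1]⟩ :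
        IsMinPDS 1 G {y0})
      have h2 := hshift.2
      omega
    · -- u has exactly two neighbors: the big case
      obtain ⟨a, b, hab, hNab⟩ := Set.ncard_eq_two.mp hd2
      have hua : u ≠ a := by
        intro h
        apply G.irrefl (v := u)
        have : a ∈ G.neighborSet u := by rw [hNab]; exact Set.mem_insert _ _
        rwa [← h] at this
      have hub : u ≠ b := by
        intro h
        apply G.irrefl (v := u)
        have : b ∈ G.neighborSet u := by rw [hNab]; exact Set.mem_insert_iff.mpr (Or.inr rfl)
        rwa [← h] at this
      have hO1card : (closedNbhd G {u}).ncard = 3 := by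
        rw [closedNbhd_singleton, hNab]
        rw [Set.ncard_insert_of_notMem (by
          intro h
          rcases h with h | h
          · exact hua h
          · exact hub h) (Set.toFinite _),
          Set.ncard_insert_of_notMem (by intro h; exact hab h) (Set.toFinite _),
          Set.ncard_singleton]
      have hpptu : pptOf 1 G {u} = Fintype.card V - 2 := by
        have hb := pptOf_le_card_bound hSpds
        rw [hO1card] at hb
        have h1 := hsingle u hSpds
        omega
      exact (big_case' hconn h5 hNab hab hSpds hsingle hdeg hpptu).elim
  · -- |S| = 2
    obtain ⟨a, b, hab, rfl⟩ := Set.ncard_eq_two.mp h2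
    have hkill : ∀ w : V, closedNbhd G ({a, b} : Set V) ⊆ closedNbhd G {w} → False := by
      intro w hw
      have hsub : powerIter 1 G {a,b} 1 ⊆ powerIter 1 G {w} 1 := by
        rw [powerIter_one, powerIter_one]; exact hw
      have hshift := shift_pds hSpds (by omega) (by omega)
        (by omega : 1 ≤ pptOf 1 G {a,b}) hsub
      have := pdNum_le hshift.1
      rw [Set.ncard_singleton] at this
      omega
    have hNS3 : (closedNbhd G ({a,b} : Set V)).ncard = 3 := by omega
    have hya : y ≠ a := fun h => hyS (h ▸ Set.mem_insert _ _)
    have hyb : y ≠ b := fun h => hyS (h ▸ Set.mem_insert_iff.mpr (Or.inr rfl))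
    have hysub : ({a, b, y} : Set V) ⊆ closedNbhd G {a, b} := by
      intro w hw
      rcases hw with rfl | rfl | rfl
      · exact subset_closedNbhd (Set.mem_insert _ _)
      · exact subset_closedNbhd (Set.mem_insert_iff.mpr (Or.inr rfl))
      · exact hyNS
    have hycard : ({a, b, y} : Set V).ncard = 3 := by
      rw [Set.ncard_insert_of_notMem (by
          intro h
          rcases h with h | h
          · exact hab h
          · exact hya h.symm) (Set.toFinite _),
        Set.ncard_insert_of_notMem (by
          intro h
          exact hyb (by
            have : b = y := h
            exact this.symm)) (Set.toFinite _),
        Set.ncard_singleton]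
    have hNSeq : closedNbhd G ({a,b} : Set V) = {a, b, y} :=
      (Set.eq_of_subset_of_ncard_le hysub (by omega) (Set.toFinite _)).symm
    have hyadj : G.Adj a y ∨ G.Adj b y := by
      rcases hyNS with h | h
      · exact absurd h hyS
      · simp only [Set.mem_iUnion] at h
        obtain ⟨v, hv, hadj⟩ := h
        rcases hv with rfl | rfl
        · exact Or.inl hadj
        · exact Or.inr hadj
    have main : ∀ a' b' : V, a' ≠ b' → ({a', b'} : Set V) = {a, b} →
        G.Adj a' y → False := by
      intro a' b' hne' hset hay
      have hNSeq' : closedNbhd G ({a',b'} : Set V) = {a', b', y} := by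
        rw [hset, hNSeq]
        have h1 : ({a, b, y} : Set V) = ({a, b} : Set V) ∪ {y} := by
          ext w; simp; tauto
        have h2 : ({a', b', y} : Set V) = ({a', b'} : Set V) ∪ {y} := by
          ext w; simp; tauto
        rw [h1, h2, hset]
      have hkill' : ∀ w : V, closedNbhd G ({a',b'} : Set V) ⊆ closedNbhd G {w} → False := by
        intro w hw
        rw [hset] at hw
        exact hkill w hw
      have hnadj : ¬ G.Adj a' b' := by
        intro hadj
        apply hkill' a'
        rw [hNSeq']
        intro w hw
        rcases hw with rfl | rfl | rfl
        · exact subset_closedNbhd rfl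
        · exact mem_closedNbhd_of_adj rfl hadj
        · exact mem_closedNbhd_of_adj rfl hay
      obtain ⟨s, hs⟩ := exists_adj hconn (by omega) b'
      have hsmem : s ∈ ({a', b', y} : Set V) := by
        rw [← hNSeq']
        exact mem_closedNbhd_of_adj (Set.mem_insert_iff.mpr (Or.inr rfl)) hs
      have hsy : s = y := by
        rcases hsmem with rfl | rfl | rfl
        · exact absurd hs.symm hnadj
        · exact absurd hs (G.irrefl)
        · rfl
      rw [hsy] at hs
      apply hkill' y
      rw [hNSeq']
      intro w hw
      rcases hw with rfl | rfl | rfl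
      · exact mem_closedNbhd_of_adj rfl hay.symm
      · exact mem_closedNbhd_of_adj rfl hs.symm
      · exact subset_closedNbhd rfl
    rcases hyadj with h | h
    · exact (main a b hab rfl h).elim
    · exact (main b a (Ne.symm hab) (Set.pair_comm b a) h).elim

end PowerProp


namespace PowerProp
open SimpleGraph
variable {V : Type*} [Fintype V] {G : SimpleGraph V} {k : ℕ}

lemma mem_closedNbhd_singleton {x w : V} :
    w ∈ closedNbhd G {x} ↔ (w = x ∨ G.Adj x w) := by
  rw [closedNbhd_singleton]
  simp [SimpleGraph.mem_neighborSet]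

lemma pdNum_ge_one (hne : Nonempty V) : 1 ≤ pdNum k G := by
  by_contra h
  push_neg at h
  have h' : pdNum k G = 0 := by omega
  obtain ⟨S, hS0, hSpds⟩ := Nat.sInf_mem (pdNum_set_nonempty (k := k) (G := G))
  have hS0' : S.ncard = 0 := by rw [hS0]; exact h'
  have hSe : S = ∅ := (Set.ncard_eq_zero (Set.toFinite S)).mp hS0'
  subst hSe
  obtain ⟨l, hl⟩ := hSpds
  rw [powerIter_empty] at hl
  exact (Set.univ_nonempty).ne_empty hl.symm

lemma pdNum_eq_one {x : V} (hne : Nonempty V) (hx : IsPDS k G {x}) : pdNum k G = 1 := by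
  have h1 := pdNum_le hx
  rw [Set.ncard_singleton] at h1
  have h2 := pdNum_ge_one (k := k) (G := G) hne
  omega

lemma pptOf_singleton_ge_two {x : V} (h1 : closedNbhd G {x} ≠ Set.univ)
    (hx : IsPDS k G {x}) : 2 ≤ pptOf k G {x} := by
  by_contra h
  push_neg at h
  have := powerIter_univ_mono hx.powerIter_pptOf (show pptOf k G {x} ≤ 1 by omega)
  rw [powerIter_one] at this
  exact h1 this

lemma ppt_eq_two_criterion (G : SimpleGraph V) (x0 : V)
    (h2 : powerIter 1 G {x0} 2 = Set.univ)
    (hno : ∀ x : V, closedNbhd G {x} ≠ Set.univ) : ppt 1 G = 2 := by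
  have hne : Nonempty V := ⟨x0⟩
  have hx0 : IsPDS 1 G {x0} := ⟨2, h2⟩
  have hpd1 : pdNum 1 G = 1 := pdNum_eq_one hne hx0
  have hmin : IsMinPDS 1 G {x0} := ⟨hx0, by rw [Set.ncard_singleton, hpd1]⟩
  have hle : ppt 1 G ≤ 2 := le_trans (ppt_le_pptOf hmin) (pptOf_le h2)
  have hge : 2 ≤ ppt 1 G := by
    obtain ⟨S, hSmin, hSppt⟩ := exists_ppt_witness (k := 1) (G := G)
    have hS1 : S.ncard = 1 := by rw [hSmin.2, hpd1]
    obtain ⟨y, rfl⟩ := Set.ncard_eq_one.mp hS1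
    rw [← hSppt]
    exact pptOf_singleton_ge_two (hno y) hSmin.1
  omega

/-- An isolated vertex is never observed unless it is in the initial set. -/
lemma not_mem_powerIter_of_isolated {w : V} (hw : G.neighborSet w = ∅) {S : Set V}
    (hwS : w ∉ S) : ∀ l, w ∉ powerIter k G S l := by
  have hnadj : ∀ v : V, ¬ G.Adj v w := by
    intro v hadj
    have : v ∈ G.neighborSet w := hadj.symm
    rw [hw] at this
    exact this
  intro l
  induction l with
  | zero => exact hwS
  | succ n ih =>
    match n, ih with
    | 0, ih =>
      rintro (h | h)
      · exact ih h
      · simp only [Set.mem_iUnion] at h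
        obtain ⟨v, _, hadj⟩ := h
        exact hnadj v hadj
    | (m+1), ih =>
      rw [powerIter_succ_of_pos (by omega)]
      rintro (h | ⟨v, _, ⟨hadj, _⟩, _⟩)
      · exact ih h
      · exact hnadj v hadj

lemma powerIter_stationary {S : Set V} (h : ∀ x ∈ S, ∀ y, G.Adj x y → y ∈ S) :
    ∀ l, powerIter k G S l = S := by
  have hcn : closedNbhd G S = S := by
    apply Set.Subset.antisymm _ subset_closedNbhd
    rintro x (hx | hx)
    · exact hx
    · simp only [Set.mem_iUnion] at hx
      obtain ⟨v, hv, hadj⟩ := hx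
      exact h v hv x hadj
  have hps : propStep k G S = S := by
    apply Set.Subset.antisymm _ subset_propStep
    rintro x (hx | ⟨v, hv, ⟨hadj, _⟩, _⟩)
    · exact hx
    · exact h v hv x hadj
  intro l
  induction l with
  | zero => rfl
  | succ n ih =>
    match n, ih with
    | 0, _ => exact hcn
    | (m+1), ih => rw [powerIter_succ_of_pos (by omega), ih, hps]

end PowerProp


namespace PowerProp
open SimpleGraph

lemma p4_adj : ∀ i j : Fin 4, (pathGraph 4).Adj i j ↔
    ((i : ℕ) + 1 = (j : ℕ) ∨ (j : ℕ) + 1 = (i : ℕ)) := fun _ _ => pathGraph_adj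

lemma p4c_adj : ∀ i j : Fin 4, (pathGraph 4)ᶜ.Adj i j ↔
    (i ≠ j ∧ ¬((i : ℕ) + 1 = (j : ℕ) ∨ (j : ℕ) + 1 = (i : ℕ))) := by
  intro i j
  rw [compl_adj, p4_adj]

lemma p4_nbr_one : (pathGraph 4).neighborSet 1 = {0, 2} := by
  ext i
  rw [SimpleGraph.mem_neighborSet, p4_adj]
  fin_cases i <;> simp <;> decide

lemma p4_nbr_two : (pathGraph 4).neighborSet 2 = {1, 3} := by
  ext i
  rw [SimpleGraph.mem_neighborSet, p4_adj]
  fin_cases i <;> simp <;> decide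

lemma ppt_p4 : ppt 1 (pathGraph 4) = 2 := by
  have hO1 : powerIter 1 (pathGraph 4) {1} 1 = {0, 1, 2} := by
    rw [powerIter_one, closedNbhd_singleton, p4_nbr_one]
    ext j
    fin_cases j <;> simp
  apply ppt_eq_two_criterion _ (1 : Fin 4)
  · apply Set.eq_univ_of_forall
    intro i
    rw [show (2 : ℕ) = 1 + 1 from rfl, powerIter_succ_of_pos le_rfl]
    fin_cases i
    · exact subset_propStep (by rw [hO1]; exact Set.mem_insert _ _)
    · exact subset_propStep (by rw [hO1]; right; exact Set.mem_insert _ _)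
    · exact subset_propStep (by rw [hO1]; right; right; rfl)
    · refine Set.mem_union_right _ ⟨2, ?_, ⟨?_, ?_⟩, ?_⟩
      · rw [hO1]; right; right; rfl
      · rw [SimpleGraph.mem_neighborSet, p4_adj]; decide
      · rw [hO1]; simp
      · have hd : (pathGraph 4).neighborSet 2 \ powerIter 1 (pathGraph 4) {1} 1
            = {(3 : Fin 4)} := by
          rw [p4_nbr_two, hO1]
          ext j
          fin_cases j <;> simp <;> decide
        rw [hd, Set.ncard_singleton]
  · intro x h
    have hx : ∀ m : Fin 4, m ∈ closedNbhd (pathGraph 4) {x} := by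
      rw [h]; intro m; trivial
    fin_cases x
    · rcases mem_closedNbhd_singleton.mp (hx 3) with h' | h'
      · exact absurd h' (by decide)
      · rw [p4_adj] at h'; revert h'; decide
    · rcases mem_closedNbhd_singleton.mp (hx 3) with h' | h'
      · exact absurd h' (by decide)
      · rw [p4_adj] at h'; revert h'; decide
    · rcases mem_closedNbhd_singleton.mp (hx 0) with h' | h'
      · exact absurd h' (by decide)
      · rw [p4_adj] at h'; revert h'; decide
    · rcases mem_closedNbhd_singleton.mp (hx 0) with h' | h'
      · exact absurd h' (by decide)
      · rw [p4_adj] at h'; revert h'; decide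

lemma p4c_nbr_zero : (pathGraph 4)ᶜ.neighborSet 0 = {2, 3} := by
  ext i
  rw [SimpleGraph.mem_neighborSet, p4c_adj]
  fin_cases i <;> simp <;> decide

lemma p4c_nbr_three : (pathGraph 4)ᶜ.neighborSet 3 = {0, 1} := by
  ext i
  rw [SimpleGraph.mem_neighborSet, p4c_adj]
  fin_cases i <;> simp <;> decide

lemma ppt_p4c : ppt 1 (pathGraph 4)ᶜ = 2 := by
  have hO1 : powerIter 1 (pathGraph 4)ᶜ {0} 1 = {0, 2, 3} := by
    rw [powerIter_one, closedNbhd_singleton, p4c_nbr_zero]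
  apply ppt_eq_two_criterion _ (0 : Fin 4)
  · apply Set.eq_univ_of_forall
    intro i
    rw [show (2 : ℕ) = 1 + 1 from rfl, powerIter_succ_of_pos le_rfl]
    fin_cases i
    · exact subset_propStep (by rw [hO1]; exact Set.mem_insert _ _)
    · refine Set.mem_union_right _ ⟨3, ?_, ⟨?_, ?_⟩, ?_⟩
      · rw [hO1]; right; right; rfl
      · rw [SimpleGraph.mem_neighborSet, p4c_adj]; constructor <;> decide
      · rw [hO1]; simp
      · have hd : (pathGraph 4)ᶜ.neighborSet 3 \ powerIter 1 (pathGraph 4)ᶜ {0} 1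
            = {(1 : Fin 4)} := by
          rw [p4c_nbr_three, hO1]
          ext j
          fin_cases j <;> simp <;> decide
        rw [hd, Set.ncard_singleton]
    · exact subset_propStep (by rw [hO1]; right; exact Set.mem_insert _ _)
    · exact subset_propStep (by rw [hO1]; right; right; rfl)
  · intro x h
    have hx : ∀ m : Fin 4, m ∈ closedNbhd (pathGraph 4)ᶜ {x} := by
      rw [h]; intro m; trivial
    fin_cases x
    · rcases mem_closedNbhd_singleton.mp (hx 1) with h' | h'
      · exact absurd h' (by decide)
      · rw [p4c_adj] at h'; revert h'; decide
    · rcases mem_closedNbhd_singleton.mp (hx 0) with h' | h'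
      · exact absurd h' (by decide)
      · rw [p4c_adj] at h'; revert h'; decide
    · rcases mem_closedNbhd_singleton.mp (hx 1) with h' | h'
      · exact absurd h' (by decide)
      · rw [p4c_adj] at h'; revert h'; decide
    · rcases mem_closedNbhd_singleton.mp (hx 2) with h' | h'
      · exact absurd h' (by decide)
      · rw [p4c_adj] at h'; revert h'; decide

end PowerProp


namespace PowerProp
open SimpleGraph
variable {V : Type*} [Fintype V] {G : SimpleGraph V}

/-- Case a: the leaf's neighbour is universal. -/
lemma case_universal {v w : V} (hconn : G.Connected) (hNv : G.neighborSet v = {w})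
    (hwu : closedNbhd G {w} = Set.univ) :
    ppt 1 G + ppt 1 Gᶜ ≤ Fintype.card V - 1 := by
  classical
  have hvw : G.Adj v w := by
    have : w ∈ G.neighborSet v := by rw [hNv]; rfl
    exact this
  have hvwne : v ≠ w := hvw.ne
  have huc : (Set.univ : Set V).ncard = Fintype.card V := by
    rw [Set.ncard_univ, Nat.card_eq_fintype_card]
  have hn2 : 2 ≤ Fintype.card V := by
    have h1 : ({v, w} : Set V).ncard = 2 := Set.ncard_pair hvwne
    have h2 := Set.ncard_le_ncard (Set.subset_univ ({v, w} : Set V)) (Set.toFinite _)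
    omega
  have hne : Nonempty V := ⟨v⟩
  -- ppt G ≤ 1
  have hpds_w : IsPDS 1 G {w} := ⟨1, by rw [powerIter_one]; exact hwu⟩
  have hpptG : ppt 1 G ≤ 1 := by
    have hmin : IsMinPDS 1 G {w} := ⟨hpds_w, by rw [Set.ncard_singleton, pdNum_eq_one hne hpds_w]⟩
    exact le_trans (ppt_le_pptOf hmin) (pptOf_le (by rw [powerIter_one]; exact hwu))
  -- complement: w is isolated
  have hNwC : Gᶜ.neighborSet w = ∅ := by
    ext y
    rw [SimpleGraph.mem_neighborSet, compl_adj]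
    simp only [Set.mem_empty_iff_false, iff_false]
    rintro ⟨hne', hnadj⟩
    have : y ∈ closedNbhd G {w} := by rw [hwu]; trivial
    rcases mem_closedNbhd_singleton.mp this with h | h
    · exact hne' h.symm
    · exact hnadj h
  -- pdNum Gᶜ = 2
  have hpdC2 : 2 ≤ pdNum 1 Gᶜ := by
    by_contra hlt
    push_neg at hlt
    obtain ⟨S, hScard, hSpds⟩ := Nat.sInf_mem (pdNum_set_nonempty (k := 1) (G := Gᶜ))
    have hS1 : S.ncard ≤ 1 := by
      have h' : S.ncard = pdNum 1 Gᶜ := hScard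
      omega
    obtain ⟨l, hl⟩ := hSpds
    have hwS : w ∈ S := by
      by_contra hws
      have h' := not_mem_powerIter_of_isolated (k := 1) hNwC hws l
      rw [hl] at h'
      exact h' trivial
    have hSw : S = {w} := by
      have h1 : ({w} : Set V) ⊆ S := Set.singleton_subset_iff.mpr hwS
      exact (Set.eq_of_subset_of_ncard_le h1
        (by rw [Set.ncard_singleton]; exact hS1) (Set.toFinite _)).symm
    rw [hSw] at hl
    have hstat := powerIter_stationary (G := Gᶜ) (k := 1) (S := ({w} : Set V))
      (by
        intro x hx y hadj
        have hx' : x = w := hx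
        subst hx'
        have : y ∈ Gᶜ.neighborSet x := hadj
        rw [hNwC] at this
        exact this.elim) l
    rw [hstat] at hl
    have : ({w} : Set V).ncard = Fintype.card V := by rw [hl, huc]
    rw [Set.ncard_singleton] at this
    omega
  -- {w, v} is a PDS of Gᶜ covering everything in one step
  have hCNwv : closedNbhd Gᶜ {w, v} = Set.univ := by
    apply Set.eq_univ_of_forall
    intro y
    by_cases hyw : y = w
    · exact subset_closedNbhd (by rw [hyw]; exact Set.mem_insert _ _)
    · by_cases hyv : y = v
      · exact subset_closedNbhd (by rw [hyv]; exact Set.mem_insert_iff.mpr (Or.inr rfl))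
      · refine mem_closedNbhd_of_adj (Set.mem_insert_iff.mpr (Or.inr rfl)) ?_
        rw [compl_adj]
        refine ⟨fun h => hyv h.symm, fun hadj => ?_⟩
        have : y ∈ G.neighborSet v := hadj
        rw [hNv] at this
        exact hyw this
  have hpds_wv : IsPDS 1 Gᶜ {w, v} := ⟨1, by rw [powerIter_one]; exact hCNwv⟩
  have hmin_wv : IsMinPDS 1 Gᶜ {w, v} := by
    refine ⟨hpds_wv, ?_⟩
    have h1 := pdNum_le hpds_wv
    have h2 : ({w, v} : Set V).ncard = 2 := Set.ncard_pair (Ne.symm hvwne)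
    omega
  rcases Nat.lt_or_ge (Fintype.card V) 3 with h3 | h3
  · -- n = 2 : {w, v} is already everything
    have hn2' : Fintype.card V = 2 := by omega
    have hwvuniv : ({w, v} : Set V) = Set.univ := by
      apply eq_univ_of_ncard_ge
      rw [Set.ncard_pair (Ne.symm hvwne)]
      omega
    have hpptC : ppt 1 Gᶜ ≤ 0 :=
      le_trans (ppt_le_pptOf hmin_wv) (pptOf_le (by rw [powerIter_zero]; exact hwvuniv))
    omega
  · have hpptC : ppt 1 Gᶜ ≤ 1 :=
      le_trans (ppt_le_pptOf hmin_wv) (pptOf_le (by rw [powerIter_one]; exact hCNwv))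
    omega

end PowerProp


namespace PowerProp
open SimpleGraph
variable {V : Type*} [Fintype V] {G : SimpleGraph V}

lemma case_nonuniversal {v w x : V} (hconn : G.Connected)
    (hNv : G.neighborSet v = {w}) (hx : x ∉ closedNbhd G {w})
    (hP4 : ¬ Nonempty (G ≃g pathGraph 4)) :
    ppt 1 G + ppt 1 Gᶜ ≤ Fintype.card V - 1 := by
  classical
  have hvw : G.Adj v w := by
    have : w ∈ G.neighborSet v := by rw [hNv]; rfl
    exact this
  have hvwne : v ≠ w := hvw.ne
  have huc : (Set.univ : Set V).ncard = Fintype.card V := by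
    rw [Set.ncard_univ, Nat.card_eq_fintype_card]
  have hxw : x ≠ w := fun h => hx (h ▸ subset_closedNbhd rfl)
  have hnwx : ¬ G.Adj w x := fun h => hx (mem_closedNbhd_of_adj rfl h)
  have hxv : x ≠ v := fun h => hx (h ▸ mem_closedNbhd_of_adj rfl hvw.symm)
  have hnvx : ¬ G.Adj v x := by
    intro h
    have : x ∈ G.neighborSet v := h
    rw [hNv] at this
    exact hxw this
  have hvwx_card : ({v, w, x} : Set V).ncard = 3 := by
    rw [Set.ncard_insert_of_notMem (by
        intro h; rcases h with h | h
        · exact hvwne h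
        · exact hxv h.symm) (Set.toFinite _),
      Set.ncard_insert_of_notMem (by intro h; exact hxw h.symm) (Set.toFinite _),
      Set.ncard_singleton]
  have hn3 : 3 ≤ Fintype.card V := by
    have h2 := Set.ncard_le_ncard (Set.subset_univ ({v, w, x} : Set V)) (Set.toFinite _)
    omega
  have hn2 : 2 ≤ Fintype.card V := by omega
  -- complement side: {v} is a PDS with propagation time ≤ 2
  have hNvC : Gᶜ.neighborSet v = Set.univ \ {v, w} := by
    ext y
    rw [SimpleGraph.mem_neighborSet, compl_adj]
    constructor
    · rintro ⟨hne', hnadj⟩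
      refine ⟨trivial, ?_⟩
      rintro (rfl | rfl)
      · exact hne' rfl
      · exact hnadj hvw
    · rintro ⟨-, hy⟩
      refine ⟨?_, ?_⟩
      · intro h
        exact hy (by rw [← h]; exact Set.mem_insert _ _)
      · intro hadj
        have : y ∈ G.neighborSet v := hadj
        rw [hNv] at this
        exact hy (by rw [this]; exact Set.mem_insert_iff.mpr (Or.inr rfl))
  have hCNv : closedNbhd Gᶜ {v} = Set.univ \ {w} := by
    rw [closedNbhd_singleton, hNvC]
    ext y
    constructor
    · rintro (rfl | ⟨-, hy⟩)
      · exact ⟨trivial, by simpa using hvwne⟩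
      · exact ⟨trivial, fun h => hy (by rw [h]; exact Set.mem_insert_iff.mpr (Or.inr rfl))⟩
    · rintro ⟨-, hy⟩
      by_cases hyv : y = v
      · exact Or.inl hyv
      · refine Or.inr ⟨trivial, ?_⟩
        rintro (rfl | rfl)
        · exact hyv rfl
        · exact hy rfl
  have h2univ : powerIter 1 Gᶜ {v} 2 = Set.univ := by
    rw [show (2 : ℕ) = 1 + 1 from rfl, powerIter_succ_of_pos le_rfl, powerIter_one]
    apply Set.eq_univ_of_forall
    intro s
    by_cases hsw : s = w
    · subst hsw
      refine Set.mem_union_right _ ⟨x, ?_, ⟨?_, ?_⟩, ?_⟩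
      · rw [hCNv]
        exact ⟨trivial, by simpa using hxw⟩
      · rw [SimpleGraph.mem_neighborSet, compl_adj]
        exact ⟨hxw, fun h => hnwx h.symm⟩
      · rw [hCNv]
        intro h
        exact h.2 rfl
      · have hsub : Gᶜ.neighborSet x \ closedNbhd Gᶜ {v} ⊆ {s} := by
          rintro q ⟨-, hq⟩
          rw [hCNv] at hq
          have : q = s := by
            by_contra hqs
            exact hq ⟨trivial, by simpa using hqs⟩
          exact this
        calc (Gᶜ.neighborSet x \ closedNbhd Gᶜ {v}).ncard
            ≤ ({s} : Set V).ncard := Set.ncard_le_ncard hsub (Set.toFinite _)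
          _ = 1 := Set.ncard_singleton _
    · exact Set.mem_union_left _ (by rw [hCNv]; exact ⟨trivial, by simpa using hsw⟩)
  have hpds_v : IsPDS 1 Gᶜ {v} := ⟨2, h2univ⟩
  have hpptC : ppt 1 Gᶜ ≤ 2 := by
    have hmin : IsMinPDS 1 Gᶜ {v} :=
      ⟨hpds_v, by rw [Set.ncard_singleton, pdNum_eq_one ⟨v⟩ hpds_v]⟩
    exact le_trans (ppt_le_pptOf hmin) (pptOf_le h2univ)
  -- size analysis
  rcases Nat.lt_or_ge (Fintype.card V) 5 with h5 | h5
  · -- card V = 3 or 4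
    rcases (by omega : Fintype.card V = 3 ∨ Fintype.card V = 4) with h3 | h4
    · -- n = 3 : impossible
      exfalso
      have huniv3 : ({v, w, x} : Set V) = Set.univ := eq_univ_of_ncard_ge (by omega)
      obtain ⟨s, hs⟩ := exists_adj hconn hn2 x
      have : s ∈ ({v, w, x} : Set V) := by rw [huniv3]; trivial
      rcases this with rfl | rfl | rfl
      · exact hnvx hs.symm
      · exact hnwx hs.symm
      · exact G.irrefl hs
    · -- n = 4 : G is the path P4, contradiction
      exfalso
      have hy : ∃ y, y ∉ ({v, w, x} : Set V) := by
        by_contra h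
        push_neg at h
        have : (Set.univ : Set V).ncard ≤ ({v, w, x} : Set V).ncard :=
          Set.ncard_le_ncard (fun s _ => h s) (Set.toFinite _)
        omega
      obtain ⟨y, hy⟩ := hy
      have hyv : y ≠ v := fun h => hy (by rw [h]; exact Set.mem_insert _ _)
      have hyw : y ≠ w := fun h =>
        hy (by rw [h]; exact Set.mem_insert_iff.mpr (Or.inr (Set.mem_insert _ _)))
      have hyx : y ≠ x := fun h =>
        hy (by rw [h]; exact Set.mem_insert_iff.mpr (Or.inr (Set.mem_insert_iff.mpr (Or.inr rfl))))
      have hV4card : ({v, w, y, x} : Set V).ncard = 4 := by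
        rw [Set.ncard_insert_of_notMem (by
            intro h; rcases h with h | h | h
            · exact hvwne h
            · exact hyv h.symm
            · exact hxv h.symm) (Set.toFinite _),
          Set.ncard_insert_of_notMem (by
            intro h; rcases h with h | h
            · exact hyw h.symm
            · exact hxw h.symm) (Set.toFinite _),
          Set.ncard_insert_of_notMem (by intro h; exact hyx (h : y = x)) (Set.toFinite _),
          Set.ncard_singleton]
      have hV4 : ({v, w, y, x} : Set V) = Set.univ := eq_univ_of_ncard_ge (by omega)
      have hall : ∀ s : V, s = v ∨ s = w ∨ s = y ∨ s = x := by
        intro s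
        have : s ∈ ({v, w, y, x} : Set V) := by rw [hV4]; trivial
        simpa using this
      have hyx_adj : G.Adj y x := by
        obtain ⟨s, hs⟩ := exists_adj hconn hn2 x
        rcases hall s with rfl | rfl | rfl | rfl
        · exact absurd hs.symm hnvx
        · exact absurd hs.symm hnwx
        · exact hs.symm
        · exact absurd hs G.irrefl
      have hnvy : ¬ G.Adj v y := by
        intro h
        have : y ∈ G.neighborSet v := h
        rw [hNv] at this
        exact hyw this
      have hwy_adj : G.Adj w y := by
        by_contra hnwy
        have hclosed := closed_eq_univ hconn (D := ({v, w} : Set V))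
          ⟨v, Set.mem_insert _ _⟩ (by
            intro p hp q hq
            rcases hp with rfl | rfl
            · have : q ∈ G.neighborSet p := hq
              rw [hNv] at this
              rw [this]
              exact Set.mem_insert_iff.mpr (Or.inr rfl)
            · rcases hall q with rfl | rfl | rfl | rfl
              · exact Set.mem_insert _ _
              · exact absurd hq G.irrefl
              · exact absurd hq hnwy
              · exact absurd hq hnwx)
        have : ({v, w} : Set V).ncard = Fintype.card V := by rw [hclosed, huc]
        rw [Set.ncard_pair hvwne] at this
        omega
      -- build the isomorphism with P4
      set f : Fin 4 → V := fun i =>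
        if i = 0 then v else if i = 1 then w else if i = 2 then y else x with hf
      have hinj : Function.Injective f := by
        intro i j hij
        fin_cases i <;> fin_cases j
        · rfl
        · exact absurd hij hvwne
        · exact absurd hij hyv.symm
        · exact absurd hij hxv.symm
        · exact absurd hij hvwne.symm
        · rfl
        · exact absurd hij hyw.symm
        · exact absurd hij hxw.symm
        · exact absurd hij hyv
        · exact absurd hij hyw
        · rfl
        · exact absurd hij hyx
        · exact absurd hij hxv
        · exact absurd hij hxw
        · exact absurd hij hyx.symm
        · rfl
      have hbij : Function.Bijective f :=
        (Fintype.bijective_iff_injective_and_card f).mpr ⟨hinj, by simp [h4]⟩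
      have hiso : pathGraph 4 ≃g G := by
        refine ⟨Equiv.ofBijective f hbij, ?_⟩
        intro i j
        fin_cases i <;> fin_cases j
        · exact iff_of_false G.irrefl (by rw [pathGraph_adj]; decide)
        · exact iff_of_true hvw (by rw [pathGraph_adj]; decide)
        · exact iff_of_false hnvy (by rw [pathGraph_adj]; decide)
        · exact iff_of_false hnvx (by rw [pathGraph_adj]; decide)
        · exact iff_of_true hvw.symm (by rw [pathGraph_adj]; decide)
        · exact iff_of_false G.irrefl (by rw [pathGraph_adj]; decide)
        · exact iff_of_true hwy_adj (by rw [pathGraph_adj]; decide)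
        · exact iff_of_false hnwx (by rw [pathGraph_adj]; decide)
        · exact iff_of_false (fun h => hnvy h.symm) (by rw [pathGraph_adj]; decide)
        · exact iff_of_true hwy_adj.symm (by rw [pathGraph_adj]; decide)
        · exact iff_of_false G.irrefl (by rw [pathGraph_adj]; decide)
        · exact iff_of_true hyx_adj (by rw [pathGraph_adj]; decide)
        · exact iff_of_false (fun h => hnvx h.symm) (by rw [pathGraph_adj]; decide)
        · exact iff_of_false (fun h => hnwx h.symm) (by rw [pathGraph_adj]; decide)
        · exact iff_of_true hyx_adj.symm (by rw [pathGraph_adj]; decide)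
        · exact iff_of_false G.irrefl (by rw [pathGraph_adj]; decide)
      exact hP4 ⟨hiso.symm⟩
  · -- n ≥ 5
    have hG := ppt_le_card_sub_three G hconn h5
    omega

end PowerProp


open SimpleGraph PowerProp in
/-- For a connected graph `G ≠ P_4` with a leaf, `ppt(G) + ppt(Ḡ) ≤ n - 1`;
moreover `ppt(P_4) + ppt(P̄_4) = 4`. -/
theorem ppt_add_ppt_compl_of_leaf {V : Type*} [Fintype V] (G : SimpleGraph V)
    (hconn : G.Connected) (hleaf : ∃ v : V, (G.neighborSet v).ncard = 1)
    (hP4 : ¬ Nonempty (G ≃g pathGraph 4)) :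
    ppt 1 G + ppt 1 Gᶜ ≤ Fintype.card V - 1 ∧
    ppt 1 (pathGraph 4) + ppt 1 (pathGraph 4)ᶜ = 4 := by
  constructor
  · obtain ⟨v, hv⟩ := hleaf
    obtain ⟨w, hw⟩ := Set.ncard_eq_one.mp hv
    by_cases hwu : closedNbhd G {w} = Set.univ
    · exact case_universal hconn hw hwu
    · have hex : ∃ x, x ∉ closedNbhd G {w} := by
        by_contra h
        push_neg at h
        exact hwu (Set.eq_univ_of_forall h)
      obtain ⟨x, hx⟩ := hex
      exact case_nonuniversal hconn hw hx hP4
  · rw [ppt_p4, ppt_p4c]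
end

section
/- For every integer t ≥ 0 there exist a finite simple graph H and an edge e of H such that ppt(H/e) ≤ ppt(H) − t, where H/e is the graph obtained from H by contracting the edge e. -/
open SimpleGraph

namespace PowerProp

variable {W : Type*}

/-- The graph obtained from `G` by contracting the edge `uv`: the vertices `u`
and `v` are identified into the single vertex `u` (living in the subtype of
vertices different from `v`), whose neighbors are `(N(u) ∪ N(v)) \ {u,v}`. -/
def contractEdge (G : SimpleGraph W) (u v : W) : SimpleGraph {x : W // x ≠ v} :=
  SimpleGraph.fromRel (fun a b =>
    G.Adj a.val b.val ∨ (a.val = u ∧ G.Adj v b.val))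

end PowerProp

namespace ContractProof
open PowerProp SimpleGraph Set

section General
variable {V : Type*} {k : ℕ} {G : SimpleGraph V} {S : Set V}

lemma subset_closedNbhd : S ⊆ closedNbhd G S := Set.subset_union_left

lemma powerIter_succ_subset : ∀ s, powerIter k G S s ⊆ powerIter k G S (s+1)
  | 0 => subset_closedNbhd
  | (s+1) => Set.subset_union_left

lemma powerIter_le_subset {s l : ℕ} (h : s ≤ l) :
    powerIter k G S s ⊆ powerIter k G S l := by
  induction l with
  | zero => simpa [Nat.le_zero.mp h]
  | succ n ih =>
    rcases Nat.lt_or_ge s (n+1) with h' | h'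
    · exact (ih (Nat.lt_succ_iff.mp h')).trans (powerIter_succ_subset n)
    · have : s = n + 1 := le_antisymm h h'
      simp [this]

lemma self_subset_powerIter (s : ℕ) : S ⊆ powerIter k G S s :=
  powerIter_le_subset (Nat.zero_le s)

lemma powerIter_empty : ∀ s, powerIter k G (∅ : Set V) s = ∅
  | 0 => rfl
  | 1 => by simp [powerIter, closedNbhd]
  | (s+2) => by
      show propStep k G (powerIter k G ∅ (s+1)) = ∅
      rw [powerIter_empty (s+1)]
      simp [propStep]

lemma pdNum_eq_one [Finite V] [Nonempty V] (z : V) (h : IsPDS k G {z}) : pdNum k G = 1 := by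
  have h1 : (1 : ℕ) ∈ {n | ∃ S : Set V, S.ncard = n ∧ IsPDS k G S} :=
    ⟨{z}, Set.ncard_singleton z, h⟩
  have h0 : (0 : ℕ) ∉ {n | ∃ S : Set V, S.ncard = n ∧ IsPDS k G S} := by
    rintro ⟨S, hS0, l, hl⟩
    obtain rfl : S = ∅ := (Set.ncard_eq_zero S.toFinite).mp hS0
    rw [powerIter_empty] at hl
    exact (Set.nonempty_iff_ne_empty.mp (Set.univ_nonempty)) hl.symm
  have hle : pdNum k G ≤ 1 := Nat.sInf_le h1
  have hne : pdNum k G ≠ 0 := by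
    intro h'
    exact h0 (h' ▸ Nat.sInf_mem ⟨1, h1⟩)
  omega

lemma powerIter_inv (A : Set V) (h1 : closedNbhd G S ⊆ A)
    (h2 : ∀ T : Set V, T ⊆ A → ∀ v ∈ T,
      (G.neighborSet v \ T).ncard ≤ k → G.neighborSet v \ T ⊆ A) :
    ∀ s, powerIter k G S s ⊆ A
  | 0 => subset_closedNbhd.trans h1
  | 1 => h1
  | (s+2) => by
      have ih := powerIter_inv A h1 h2 (s+1)
      show propStep k G (powerIter k G S (s+1)) ⊆ A
      rintro w (hw | ⟨v, hv, hvw, hcard⟩)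
      · exact ih hw
      · exact h2 _ ih v hv hcard hvw

end General
end ContractProof

namespace ContractProof
open PowerProp SimpleGraph Set

section Concrete
variable (t : ℕ)

def Hg : SimpleGraph (Fin (2*t+5)) :=
  SimpleGraph.fromRel (fun a b => (b.val = a.val + 1 ∧ 1 ≤ a.val) ∨ (a.val = 0 ∧ b.val = 2))

lemma Hg_adj {a b : Fin (2*t+5)} : (Hg t).Adj a b ↔
    a.val ≠ b.val ∧ ((b.val = a.val + 1 ∧ 1 ≤ a.val) ∨ (a.val = b.val + 1 ∧ 1 ≤ b.val) ∨
      (a.val = 0 ∧ b.val = 2) ∨ (b.val = 0 ∧ a.val = 2)) := by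
  unfold Hg
  rw [SimpleGraph.fromRel_adj]
  rw [Fin.ne_iff_vne]
  tauto

def ctr : Fin (2*t+5) := ⟨2, by omega⟩
def z0 : Fin (2*t+5) := ⟨0, by omega⟩



lemma Hg_cover : ∀ s, ∀ x : Fin (2*t+5), x.val ≤ s + 3 →
    x ∈ powerIter 1 (Hg t) {ctr t} (s+1) := by
  intro s
  induction s with
  | zero =>
    intro x hx
    show x ∈ closedNbhd (Hg t) {ctr t}
    rcases eq_or_ne x.val 2 with h2 | h2
    · exact Or.inl (by ext; simpa [ctr] using h2)
    · refine Or.inr ?_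
      simp only [Set.mem_iUnion, Set.mem_singleton_iff]
      refine ⟨ctr t, rfl, ?_⟩
      rw [SimpleGraph.mem_neighborSet, Hg_adj]
      have hc : (ctr t).val = 2 := rfl
      omega
  | succ s ih =>
    intro x hx
    show x ∈ propStep 1 (Hg t) (powerIter 1 (Hg t) {ctr t} (s+1))
    rcases Nat.lt_or_ge x.val (s+4) with hlt | hge
    · exact Or.inl (ih x (by omega))
    have hxval : x.val = s + 4 := by omega
    have hxn : x.val < 2*t+5 := x.isLt
    by_cases hxin : x ∈ powerIter 1 (Hg t) {ctr t} (s+1)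
    · exact Or.inl hxin
    set T := powerIter 1 (Hg t) {ctr t} (s+1) with hT
    have hv : (⟨s+3, by omega⟩ : Fin (2*t+5)) ∈ T := ih _ (by simp)
    set v : Fin (2*t+5) := ⟨s+3, by omega⟩ with hvdef
    have hvval : v.val = s + 3 := rfl
    have hadj : x ∈ (Hg t).neighborSet v := by
      rw [SimpleGraph.mem_neighborSet, Hg_adj]; omega
    have hsub : (Hg t).neighborSet v \ T ⊆ {x} := by
      rintro w ⟨hw, hwT⟩
      rw [SimpleGraph.mem_neighborSet, Hg_adj] at hw
      have : w.val = s + 2 ∨ w.val = s + 4 := by omega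
      rcases this with h | h
      · exact absurd (ih w (by omega)) hwT
      · have : w = x := by ext; omega
        simp [this]
    refine Or.inr ⟨v, hv, ⟨hadj, hxin⟩, ?_⟩
    calc ((Hg t).neighborSet v \ T).ncard ≤ ({x} : Set _).ncard :=
          Set.ncard_le_ncard hsub (Set.finite_singleton x)
      _ = 1 := Set.ncard_singleton x

lemma Hg_pds : IsPDS 1 (Hg t) {ctr t} := by
  refine ⟨2*t+2, ?_⟩
  rw [Set.eq_univ_iff_forall]
  intro x
  have : 2*t+2 = (2*t+1) + 1 := by omega
  rw [this]
  exact Hg_cover t (2*t+1) x (by omega)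


lemma Hg_upper : ∀ s, ∀ x ∈ powerIter 1 (Hg t) {ctr t} s, x.val ≤ s + 2
  | 0 => by
    intro x hx
    obtain rfl : x = ctr t := hx
    show (2:ℕ) ≤ 0 + 2
    omega
  | 1 => by
    intro x hx
    rcases hx with hx | hx
    · obtain rfl : x = ctr t := hx
      show (2:ℕ) ≤ 1 + 2
      omega
    · simp only [Set.mem_iUnion, Set.mem_singleton_iff] at hx
      obtain ⟨v, rfl, hv⟩ := hx
      rw [SimpleGraph.mem_neighborSet, Hg_adj] at hv
      have hc : (ctr t).val = 2 := rfl
      omega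
  | (s+2) => by
    intro x hx
    rcases hx with hx | hx
    · have := Hg_upper (s+1) x hx
      omega
    · obtain ⟨v, hv, ⟨hadj, _⟩, _⟩ := hx
      have hvb := Hg_upper (s+1) v hv
      rw [SimpleGraph.mem_neighborSet, Hg_adj] at hadj
      omega

lemma Hg_not_pds_low {z : Fin (2*t+5)} (hz : z.val ≤ 1) : ¬ IsPDS 1 (Hg t) {z} := by
  have key : ∀ s, powerIter 1 (Hg t) {z} s ⊆ {x : Fin (2*t+5) | x.val = z.val ∨ x.val = 2} := by
    apply powerIter_inv
    · rintro w (hw | hw)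
      · rw [Set.mem_singleton_iff] at hw; subst hw; exact Or.inl rfl
      · simp only [Set.mem_iUnion, Set.mem_singleton_iff] at hw
        obtain ⟨v, rfl, hv⟩ := hw
        rw [SimpleGraph.mem_neighborSet, Hg_adj] at hv
        right; omega
    · intro T hT v hv hcard
      rcases hT hv with h | h
      · -- v.val = z.val ≤ 1 : its only neighbor is vertex 2
        rintro w ⟨hw, _⟩
        rw [SimpleGraph.mem_neighborSet, Hg_adj] at hw
        right; omega
      · -- v.val = 2 : blocked, ncard ≥ 2
        exfalso
        set w1 : Fin (2*t+5) := ⟨1 - z.val, by omega⟩ with hw1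
        set w3 : Fin (2*t+5) := ⟨3, by omega⟩ with hw3
        have hw1v : w1.val = 1 - z.val := rfl
        have hw3v : w3.val = 3 := rfl
        have hpair : ({w1, w3} : Set (Fin (2*t+5))) ⊆ (Hg t).neighborSet v \ T := by
          rintro w (rfl | rfl)
          · constructor
            · rw [SimpleGraph.mem_neighborSet, Hg_adj]; omega
            · intro hmem
              rcases hT hmem with h' | h' <;> omega
          · constructor
            · rw [SimpleGraph.mem_neighborSet, Hg_adj]; omega
            · intro hmem
              rcases hT hmem with h' | h' <;> omega
        have h2 : ({w1, w3} : Set (Fin (2*t+5))).ncard = 2 := by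
          rw [Set.ncard_pair]
          rw [Fin.ne_iff_vne]; omega
        have := Set.ncard_le_ncard hpair (Set.toFinite _)
        omega
  rintro ⟨l, hl⟩
  have : (⟨3, by omega⟩ : Fin (2*t+5)) ∈ powerIter 1 (Hg t) {z} l := by
    rw [hl]; trivial
  have := key l this
  simp only [Set.mem_setOf_eq] at this
  omega

lemma Hg_not_pds_high {z : Fin (2*t+5)} (hz : 3 ≤ z.val) : ¬ IsPDS 1 (Hg t) {z} := by
  have key : ∀ s, powerIter 1 (Hg t) {z} s ⊆ {x : Fin (2*t+5) | 2 ≤ x.val} := by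
    apply powerIter_inv
    · rintro w (hw | hw)
      · rw [Set.mem_singleton_iff] at hw; subst hw; exact hz.trans' (by omega)
      · simp only [Set.mem_iUnion, Set.mem_singleton_iff] at hw
        obtain ⟨v, rfl, hv⟩ := hw
        rw [SimpleGraph.mem_neighborSet, Hg_adj] at hv
        simp only [Set.mem_setOf_eq]
        omega
    · intro T hT v hv hcard
      have hv2 : 2 ≤ v.val := hT hv
      rcases eq_or_lt_of_le hv2 with h | h
      · -- v.val = 2 : blocked
        exfalso
        set w0 : Fin (2*t+5) := ⟨0, by omega⟩ with hw0
        set w1 : Fin (2*t+5) := ⟨1, by omega⟩ with hw1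
        have hw0v : w0.val = 0 := rfl
        have hw1v : w1.val = 1 := rfl
        have hpair : ({w0, w1} : Set (Fin (2*t+5))) ⊆ (Hg t).neighborSet v \ T := by
          rintro w (rfl | rfl)
          · refine ⟨?_, fun hmem => by have := hT hmem; simp only [Set.mem_setOf_eq] at this; omega⟩
            rw [SimpleGraph.mem_neighborSet, Hg_adj]; omega
          · refine ⟨?_, fun hmem => by have := hT hmem; simp only [Set.mem_setOf_eq] at this; omega⟩
            rw [SimpleGraph.mem_neighborSet, Hg_adj]; omega
        have h2 : ({w0, w1} : Set (Fin (2*t+5))).ncard = 2 := by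
          rw [Set.ncard_pair]
          rw [Fin.ne_iff_vne]; omega
        have := Set.ncard_le_ncard hpair (Set.toFinite _)
        omega
      · rintro w ⟨hw, _⟩
        rw [SimpleGraph.mem_neighborSet, Hg_adj] at hw
        simp only [Set.mem_setOf_eq]
        omega
  rintro ⟨l, hl⟩
  have : (⟨0, by omega⟩ : Fin (2*t+5)) ∈ powerIter 1 (Hg t) {z} l := by
    rw [hl]; trivial
  have := key l this
  simp only [Set.mem_setOf_eq] at this
  omega

lemma Hg_pdNum : pdNum 1 (Hg t) = 1 :=
  pdNum_eq_one (ctr t) (Hg_pds t)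

lemma Hg_min_unique {S : Set (Fin (2*t+5))} (hS : IsMinPDS 1 (Hg t) S) : S = {ctr t} := by
  obtain ⟨hpds, hcard⟩ := hS
  rw [Hg_pdNum] at hcard
  obtain ⟨z, rfl⟩ := Set.ncard_eq_one.mp hcard
  have hz2 : z.val = 2 := by
    by_contra h
    rcases Nat.lt_or_ge z.val 2 with h' | h'
    · exact Hg_not_pds_low t (by omega) hpds
    · exact Hg_not_pds_high t (by omega) hpds
  have : z = ctr t := by
    apply Fin.ext; exact hz2
  rw [this]

lemma Hg_pptOf_lb : 2*t+2 ≤ pptOf 1 (Hg t) {ctr t} := by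
  rw [pptOf]
  have hne : {l | powerIter 1 (Hg t) {ctr t} l = Set.univ}.Nonempty := (Hg_pds t).imp (fun _ h => h)
  have hmem := Nat.sInf_mem hne
  set l := sInf {l | powerIter 1 (Hg t) {ctr t} l = Set.univ}
  by_contra h
  push_neg at h
  have hlast : (⟨2*t+4, by omega⟩ : Fin (2*t+5)) ∈ powerIter 1 (Hg t) {ctr t} l := by
    rw [Set.mem_setOf_eq] at hmem
    rw [hmem]; trivial
  have := Hg_upper t l _ hlast
  simp only at this
  omega

lemma Hg_ppt_lb : 2*t+2 ≤ ppt 1 (Hg t) := by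
  have hne : {r | ∃ S, IsMinPDS 1 (Hg t) S ∧ pptOf 1 (Hg t) S = r}.Nonempty := by
    refine ⟨pptOf 1 (Hg t) {ctr t}, {ctr t}, ⟨Hg_pds t, ?_⟩, rfl⟩
    rw [Hg_pdNum, Set.ncard_singleton]
  have hmem := Nat.sInf_mem hne
  obtain ⟨S, hmin, heq⟩ := hmem
  rw [Hg_min_unique t hmin] at heq
  rw [ppt]
  rw [← heq] at *
  exact Hg_pptOf_lb t

def Pg : SimpleGraph {x : Fin (2*t+5) // x ≠ z0 t} := contractEdge (Hg t) (ctr t) (z0 t)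

lemma Pg_adj {a b : {x : Fin (2*t+5) // x ≠ z0 t}} :
    (Pg t).Adj a b ↔ (b.1.val = a.1.val + 1 ∨ a.1.val = b.1.val + 1) := by
  have ha : a.1.val ≠ 0 := fun h => a.2 (Fin.ext h)
  have hb : b.1.val ≠ 0 := fun h => b.2 (Fin.ext h)
  rw [Pg, contractEdge, SimpleGraph.fromRel_adj]
  have hz : (z0 t).val = 0 := rfl
  have hc : (ctr t).val = 2 := rfl
  constructor
  · rintro ⟨hne, h⟩
    have hne' : a.1.val ≠ b.1.val := fun h' => hne (Subtype.ext (Fin.ext h'))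
    rcases h with (h | ⟨hac, h⟩) | (h | ⟨hbc, h⟩)
    · rw [Hg_adj] at h; omega
    · rw [Hg_adj] at h
      have hac' : a.1.val = 2 := by rw [hac]; exact hc
      omega
    · rw [Hg_adj] at h; omega
    · rw [Hg_adj] at h
      have hbc' : b.1.val = 2 := by rw [hbc]; exact hc
      omega
  · intro h
    refine ⟨fun he => by rw [he] at h; omega, ?_⟩
    rcases h with h | h
    · exact Or.inl (Or.inl ((Hg_adj t).mpr ⟨by omega, Or.inl ⟨h, by omega⟩⟩))
    · exact Or.inr (Or.inl ((Hg_adj t).mpr ⟨by omega, Or.inl ⟨h, by omega⟩⟩))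

def mv : {x : Fin (2*t+5) // x ≠ z0 t} :=
  ⟨⟨t+3, by omega⟩, by
    intro h
    have : (t+3 : ℕ) = 0 := congrArg Fin.val h
    omega⟩

lemma Pg_cover : ∀ s, ∀ x : {x : Fin (2*t+5) // x ≠ z0 t},
    t + 2 - s ≤ x.1.val → x.1.val ≤ t + 4 + s →
    x ∈ powerIter 1 (Pg t) {mv t} (s+1) := by
  have hm : (mv t).1.val = t + 3 := rfl
  intro s
  induction s with
  | zero =>
    intro x hlo hhi
    show x ∈ closedNbhd (Pg t) {mv t}
    rcases eq_or_ne x.1.val (t+3) with h3 | h3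
    · exact Or.inl (Subtype.ext (Fin.ext (by omega)))
    · refine Or.inr ?_
      simp only [Set.mem_iUnion, Set.mem_singleton_iff]
      refine ⟨mv t, rfl, ?_⟩
      rw [SimpleGraph.mem_neighborSet, Pg_adj]
      omega
  | succ s ih =>
    intro x hlo hhi
    have hx0 : x.1.val ≠ 0 := fun h => x.2 (Fin.ext h)
    have hxn : x.1.val < 2*t+5 := x.1.isLt
    show x ∈ propStep 1 (Pg t) (powerIter 1 (Pg t) {mv t} (s+1))
    by_cases hold : t + 2 - s ≤ x.1.val ∧ x.1.val ≤ t + 4 + s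
    · exact Or.inl (ih x hold.1 hold.2)
    by_cases hxin : x ∈ powerIter 1 (Pg t) {mv t} (s+1)
    · exact Or.inl hxin
    set T := powerIter 1 (Pg t) {mv t} (s+1) with hT
    rcases Nat.lt_or_ge x.1.val (t + 2 - s) with hleft | hright
    · -- left extension: x.val = t + 1 - s, with s ≤ t
      have hs : s ≤ t := by omega
      have hxval : x.1.val = t + 1 - s := by omega
      set v : {x : Fin (2*t+5) // x ≠ z0 t} :=
        ⟨⟨t + 2 - s, by omega⟩, fun h => by
          have : t + 2 - s = 0 := congrArg Fin.val h
          omega⟩ with hvdef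
      have hvval : v.1.val = t + 2 - s := rfl
      have hvT : v ∈ T := ih v (by omega) (by omega)
      have hadj : x ∈ (Pg t).neighborSet v := by
        rw [SimpleGraph.mem_neighborSet, Pg_adj]; omega
      have hsub : (Pg t).neighborSet v \ T ⊆ {x} := by
        rintro w ⟨hw, hwT⟩
        rw [SimpleGraph.mem_neighborSet, Pg_adj] at hw
        have : w.1.val = t + 1 - s ∨ w.1.val = t + 3 - s := by omega
        rcases this with h | h
        · have : w = x := Subtype.ext (Fin.ext (by omega))
          simp [this]
        · exact absurd (ih w (by omega) (by omega)) hwT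
      refine Or.inr ⟨v, hvT, ⟨hadj, hxin⟩, ?_⟩
      calc ((Pg t).neighborSet v \ T).ncard ≤ ({x} : Set _).ncard :=
            Set.ncard_le_ncard hsub (Set.finite_singleton x)
        _ = 1 := Set.ncard_singleton x
    · -- right extension: x.val = t + 5 + s
      have hxval : x.1.val = t + 5 + s := by omega
      set v : {x : Fin (2*t+5) // x ≠ z0 t} :=
        ⟨⟨t + 4 + s, by omega⟩, fun h => by
          have : t + 4 + s = 0 := congrArg Fin.val h
          omega⟩ with hvdef
      have hvval : v.1.val = t + 4 + s := rfl
      have hvT : v ∈ T := ih v (by omega) (by omega)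
      have hadj : x ∈ (Pg t).neighborSet v := by
        rw [SimpleGraph.mem_neighborSet, Pg_adj]; omega
      have hsub : (Pg t).neighborSet v \ T ⊆ {x} := by
        rintro w ⟨hw, hwT⟩
        rw [SimpleGraph.mem_neighborSet, Pg_adj] at hw
        have : w.1.val = t + 3 + s ∨ w.1.val = t + 5 + s := by omega
        rcases this with h | h
        · exact absurd (ih w (by omega) (by omega)) hwT
        · have : w = x := Subtype.ext (Fin.ext (by omega))
          simp [this]
      refine Or.inr ⟨v, hvT, ⟨hadj, hxin⟩, ?_⟩
      calc ((Pg t).neighborSet v \ T).ncard ≤ ({x} : Set _).ncard :=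
            Set.ncard_le_ncard hsub (Set.finite_singleton x)
        _ = 1 := Set.ncard_singleton x

lemma Pg_univ : powerIter 1 (Pg t) {mv t} (t+2) = Set.univ := by
  rw [Set.eq_univ_iff_forall]
  intro x
  have hx0 : x.1.val ≠ 0 := fun h => x.2 (Fin.ext h)
  have hxn : x.1.val < 2*t+5 := x.1.isLt
  have : t + 2 = (t+1) + 1 := rfl
  rw [this]
  exact Pg_cover t (t+1) x (by omega) (by omega)

lemma Pg_pds : IsPDS 1 (Pg t) {mv t} := ⟨t+2, Pg_univ t⟩

lemma Pg_ppt_ub : ppt 1 (Pg t) ≤ t + 2 := by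
  haveI : Nonempty {x : Fin (2*t+5) // x ≠ z0 t} := ⟨mv t⟩
  have hpd : pdNum 1 (Pg t) = 1 := pdNum_eq_one (mv t) (Pg_pds t)
  have hmin : IsMinPDS 1 (Pg t) {mv t} := ⟨Pg_pds t, by rw [Set.ncard_singleton, hpd]⟩
  have h1 : ppt 1 (Pg t) ≤ pptOf 1 (Pg t) {mv t} :=
    Nat.sInf_le ⟨{mv t}, hmin, rfl⟩
  have h2 : pptOf 1 (Pg t) {mv t} ≤ t + 2 := Nat.sInf_le (Pg_univ t)
  omega

end Concrete
end ContractProof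

open PowerProp in
/-- Contracting an edge can decrease the power propagation time by any amount. -/
theorem exists_contract_ppt_decrease (t : ℕ) :
    ∃ (n : ℕ) (H : SimpleGraph (Fin n)) (u v : Fin n), H.Adj u v ∧
      (ppt 1 (contractEdge H u v) : ℤ) ≤ (ppt 1 H : ℤ) - t := by
  refine ⟨2*t+5, ContractProof.Hg t, ContractProof.ctr t, ContractProof.z0 t, ?_, ?_⟩
  · rw [ContractProof.Hg_adj]
    have hc : (ContractProof.ctr t).val = 2 := rfl
    have hz : (ContractProof.z0 t).val = 0 := rfl
    omega
  · have ha := ContractProof.Hg_ppt_lb t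
    have hb := ContractProof.Pg_ppt_ub t
    rw [ContractProof.Pg] at hb
    omega
end
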